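/- arXiv:1303.2453 — 2 statements merged into one kernel-verified Lean document; each statement's English description precedes it below -/
import Mathlib

section
/- Let ρ be a run of a level-2 collapsible pushdown system S, and let s,u be stacks such that: (1) s ⊑ ρ; (2) TOP₁(u)=TOP₁(s); (3) |s|=|u|; and (4) writing ρ(0)=(q,t), the 2-word t[s/u] is in Stacks(Σ). Then the function ρ[s/u] defined by ρ[s/u](i) := ρ(i)[s/u] (replacing the prefix s by u in every stack, leaving states unchanged) is a run of S. -/
namespace CPG

/-! ## Level-2 collapsible pushdown stacks -/

/-- Stack letters: `Sum.inl σ` is a letter with a level-1 link,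
`Sum.inr (σ, k)` is a letter with a level-2 link to the substack of width `k`. -/
abbrev Letter (A : Type) := A ⊕ (A × ℕ)

def symOf {A : Type} : Letter A → A
  | Sum.inl a => a
  | Sum.inr (a, _) => a

def lvlOf {A : Type} : Letter A → ℕ
  | Sum.inl _ => 1
  | Sum.inr _ => 2

abbrev Word (A : Type) := List (Letter A)

/-- A 2-word: a list of words; the last word is the topmost one. -/
abbrev Stack2 (A : Type) := List (Word A)

/-- The initial level-2 stack `⊥₂`. -/
def bottom2 {A : Type} (bot : A) : Stack2 A := [[Sum.inl bot]]

def top2 {A : Type} (s : Stack2 A) : Option (Word A) := s.getLast?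

def top1 {A : Type} (s : Stack2 A) : Option (Letter A) := s.getLast?.bind List.getLast?

def symS {A : Type} (s : Stack2 A) : Option A := (top1 s).map symOf

def lvlS {A : Type} (s : Stack2 A) : Option ℕ := (top1 s).map lvlOf

def lnkS {A : Type} (s : Stack2 A) : Option ℕ :=
  match top1 s, top2 s with
  | some (Sum.inr (_, j)), _ => some j
  | some (Sum.inl _), some w => some (w.length - 1)
  | _, _ => none

def clone2 {A : Type} (s : Stack2 A) : Option (Stack2 A) :=
  (top2 s).map fun w => s ++ [w]

def push1 {A : Type} [DecidableEq A] (bot a : A) (s : Stack2 A) : Option (Stack2 A) :=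
  if a = bot then none else (top2 s).map fun w => s.dropLast ++ [w ++ [Sum.inl a]]

def push2 {A : Type} [DecidableEq A] (bot a : A) (s : Stack2 A) : Option (Stack2 A) :=
  if a = bot then none else
    (top2 s).map fun w => s.dropLast ++ [w ++ [Sum.inr (a, s.length - 1)]]

def pop2 {A : Type} (s : Stack2 A) : Option (Stack2 A) :=
  if 1 < s.length then some s.dropLast else none

def pop1 {A : Type} (s : Stack2 A) : Option (Stack2 A) :=
  match s.getLast? with
  | some w => if 1 < w.length then some (s.dropLast ++ [w.dropLast]) else none
  | none => none

def collapse {A : Type} (s : Stack2 A) : Option (Stack2 A) :=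
  match top1 s with
  | some (Sum.inr (_, k)) => if 0 < k then some (s.take k) else none
  | some (Sum.inl _) => pop1 s
  | none => none

/-- The level-2 stack operations. -/
inductive Op (A : Type) where
  | clone2 | pop1 | pop2 | collapse
  | push1 (a : A) | push2 (a : A)

def applyOp {A : Type} [DecidableEq A] (bot : A) : Op A → Stack2 A → Option (Stack2 A)
  | .clone2 => clone2
  | .pop1 => pop1
  | .pop2 => pop2
  | .collapse => collapse
  | .push1 a => push1 bot a
  | .push2 a => push2 bot a

/-- `Stacks(Σ)` : the smallest set containing `⊥₂` and closed under the operations. -/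
inductive IsStack {A : Type} [DecidableEq A] (bot : A) : Stack2 A → Prop where
  | base : IsStack bot (bottom2 bot)
  | step {s t : Stack2 A} (op : Op A) : IsStack bot s → applyOp bot op s = some t →
      IsStack bot t

/-- Iterated application of a partial stack operation. -/
def iter {A : Type} (f : Stack2 A → Option (Stack2 A)) : ℕ → Stack2 A → Option (Stack2 A)
  | 0, s => some s
  | n + 1, s => (f s).bind (iter f n)

/-- `t` is a substack of `s`: `t = Pop₁ⁿ(Pop₂ᵐ(s))`. -/
def Substack {A : Type} (t s : Stack2 A) : Prop :=
  ∃ n m, (iter pop2 m s).bind (iter pop1 n) = some t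

def ProperSubstack {A : Type} (t s : Stack2 A) : Prop := Substack t s ∧ t ≠ s

/-- `s` is a prefix of `t` (`s ⊑ t`). -/
def StackPrefix {A : Type} (s t : Stack2 A) : Prop :=
  s ≠ [] ∧ s.length ≤ t.length ∧ s.dropLast <+: t ∧
    ∀ j, s.length - 1 ≤ j → j < t.length → s.getLastD [] <+: t.getD j []

/-- `t[s/u]` : the stack obtained from `t` by replacing the prefix `s` by `u`. -/
def substPrefix {A : Type} (t s u : Stack2 A) : Stack2 A :=
  u.dropLast ++
    (t.drop (s.length - 1)).map fun v => u.getLastD [] ++ v.drop (s.getLastD []).length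

/-! ## Collapsible pushdown systems and runs -/

/-- A level-2 collapsible pushdown system. -/
structure CPS (Q A Γ : Type) where
  bot : A
  q0 : Q
  Δ : Set (Q × A × Γ × Q × Op A)

variable {Q A Γ : Type} [DecidableEq A]

/-- A `γ`-labelled transition realized by the operation `op`. -/
def TransOp (S : CPS Q A Γ) (γ : Γ) (op : Op A) (c c' : Q × Stack2 A) : Prop :=
  ∃ σ : A, symS c.2 = some σ ∧ (c.1, σ, γ, c'.1, op) ∈ S.Δ ∧
    applyOp S.bot op c.2 = some c'.2

def Trans (S : CPS Q A Γ) (γ : Γ) (c c' : Q × Stack2 A) : Prop :=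
  ∃ op, TransOp S γ op c c'

/-- A run of a collapsible pushdown system (recording configurations, labels and
operations of each step). -/
structure Run (S : CPS Q A Γ) where
  len : ℕ
  cfg : ℕ → Q × Stack2 A
  lab : ℕ → Γ
  op : ℕ → Op A
  ok : ∀ i, i < len → TransOp S (lab i) (op i) (cfg i) (cfg (i + 1))

def Run.stk {S : CPS Q A Γ} (ρ : Run S) (i : ℕ) : Stack2 A := (ρ.cfg i).2

/-- The word of labels along a run. -/
def Run.labels {S : CPS Q A Γ} (ρ : Run S) : List Γ :=
  List.ofFn fun i : Fin ρ.len => ρ.lab i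

/-- `Reach_L`-reachability: a run from `c` to `c'` labelled by a word in `L`. -/
def ReachL (S : CPS Q A Γ) (L : Language Γ) (c c' : Q × Stack2 A) : Prop :=
  ∃ ρ : Run S, ρ.cfg 0 = c ∧ ρ.cfg ρ.len = c' ∧ ρ.labels ∈ L

/-- Plain reachability. -/
def Reach (S : CPS Q A Γ) (c c' : Q × Stack2 A) : Prop :=
  ∃ ρ : Run S, ρ.cfg 0 = c ∧ ρ.cfg ρ.len = c'

/-! ## ε-contraction -/

def oneLetterLang (γ : Γ) : Language Γ := {[γ]}

def nonEpsLang (eps : Γ) : Language Γ := {w | ∃ γ : Γ, γ ≠ eps ∧ w = [γ]}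

/-- The language `{ε}*`. -/
def epsStar (eps : Γ) : Language Γ := KStar.kstar (oneLetterLang eps)

/-- The language `({ε}*(Γ∖{ε}))*`. -/
def domLang (eps : Γ) : Language Γ :=
  KStar.kstar (epsStar eps * nonEpsLang eps)

/-- The language `{ε}*γ`. -/
def edgeLang (eps γ : Γ) : Language Γ := epsStar eps * oneLetterLang γ

/-- The vertex set of the ε-contraction `G/ε`. -/
def EpsDomain (S : CPS Q A Γ) (eps : Γ) : Set (Q × Stack2 A) :=
  {c | ReachL S (domLang eps) (S.q0, bottom2 S.bot) c}

/-! ## (Generalised) milestones and the order ≪ -/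

/-- `wordAt bot s i` is the word `wᵢ` of `s`, with the convention `w₀ = ⊥`. -/
def wordAt {A : Type} (bot : A) (s : Stack2 A) (i : ℕ) : Word A :=
  if i = 0 then [Sum.inl bot] else s.getD (i - 1) []

/-- Longest common prefix of two words. -/
def lcp {α : Type} [DecidableEq α] : List α → List α → List α
  | a :: s, b :: t => if a = b then a :: lcp s t else []
  | _, _ => []

/-- `m` is a generalised milestone of `s`. -/
def GenMilestone (bot : A) (s m : Stack2 A) : Prop :=
  ∃ i v, i < s.length ∧ m = s.take i ++ [v] ∧
    lcp (wordAt bot s i) (wordAt bot s (i + 1)) <+: v ∧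
    (v <+: wordAt bot s i ∨ v <+: wordAt bot s (i + 1))

/-- `m` is a milestone of `s`. -/
def Milestone (bot : A) (s m : Stack2 A) : Prop :=
  ∃ i v, i < s.length ∧ m = s.take i ++ [v] ∧
    lcp (wordAt bot s i) (wordAt bot s (i + 1)) <+: v ∧
    v <+: wordAt bot s (i + 1)

def genMilestones (bot : A) (s : Stack2 A) : Set (Stack2 A) := {m | GenMilestone bot s m}

def milestones (bot : A) (s : Stack2 A) : Set (Stack2 A) := {m | Milestone bot s m}

/-- The base cases of the partial order `≪`. -/
def llBase (bot : A) (s t : Stack2 A) : Prop :=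
  s.length < t.length ∨
    (s ≠ [] ∧ s.length = t.length ∧ s.dropLast = t.dropLast ∧
      ((t.getLastD [] <+: s.getLastD [] ∧ t.getLastD [] ≠ s.getLastD [] ∧
          s.getLastD [] <+: wordAt bot s (s.length - 1)) ∨
        (s.getLastD [] <+: t.getLastD [] ∧ s.getLastD [] ≠ t.getLastD [] ∧
          ¬ t.getLastD [] <+: wordAt bot s (s.length - 1))))

/-- The order `≪`: the smallest reflexive transitive relation containing `llBase`. -/
def ll (bot : A) : Stack2 A → Stack2 A → Prop := Relation.ReflTransGen (llBase bot)

/-- `m'` is the ≪-successor of `m` within `genMilestones bot s`. -/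
def LlSuccessor (bot : A) (s m m' : Stack2 A) : Prop :=
  GenMilestone bot s m ∧ GenMilestone bot s m' ∧ m ≠ m' ∧ ll bot m m' ∧
    ∀ m'', GenMilestone bot s m'' → ll bot m m'' → m'' ≠ m → ll bot m' m''

/-! ## Loops, returns and 1-loops -/

/-- The segment `[i,j]` of `ρ` is a loop (of its initial stack). -/
def LoopSeg {S : CPS Q A Γ} (ρ : Run S) (i j : ℕ) : Prop :=
  i ≤ j ∧ j ≤ ρ.len ∧ ρ.stk j = ρ.stk i ∧
    (∀ k, i ≤ k → k ≤ j → ∀ t, pop2 (ρ.stk i) = some t → ¬ Substack (ρ.stk k) t) ∧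
    (∀ k, i ≤ k → k ≤ j → ∀ m, 0 < m → ∀ t, iter pop1 m (ρ.stk i) = some t →
      ρ.stk k = t → ∀ m', m' < m → ∃ t', iter pop1 m' (ρ.stk i) = some t' ∧
        lvlS t' = some 1)

/-- A high loop: a loop that never visits `Pop₁` of its stack. -/
def HighLoopSeg {S : CPS Q A Γ} (ρ : Run S) (i j : ℕ) : Prop :=
  LoopSeg ρ i j ∧ ∀ k, i ≤ k → k ≤ j → ∀ t, pop1 (ρ.stk i) = some t → ρ.stk k ≠ t

/-- A low loop: a loop whose second and second-to-last stacks are `Pop₁` of its stack. -/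
def LowLoopSeg {S : CPS Q A Γ} (ρ : Run S) (i j : ℕ) : Prop :=
  LoopSeg ρ i j ∧ i < j ∧
    ∃ t, pop1 (ρ.stk i) = some t ∧ ρ.stk (i + 1) = t ∧ ρ.stk (j - 1) = t

/-- The common part of the definition of a return on the segment `[i,j]`:
it leads from its initial stack `t` to `Pop₂(t)` and never visits a substack
of `Pop₂(t)` before its final configuration. -/
def RetShell {S : CPS Q A Γ} (ρ : Run S) (i j : ℕ) : Prop :=
  i < j ∧ j ≤ ρ.len ∧ pop2 (ρ.stk i) = some (ρ.stk j) ∧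
    ∀ k, i ≤ k → k < j → ¬ Substack (ρ.stk k) (ρ.stk j)

/-- The segment `[i,j]` of `ρ` is a return (from its initial stack `t` to `Pop₂(t)`). -/
inductive RetSeg {S : CPS Q A Γ} (ρ : Run S) : ℕ → ℕ → Prop where
  | pop2 {i j : ℕ} (h : RetShell ρ i j) (hop : ρ.op (j - 1) = Op.pop2) : RetSeg ρ i j
  | collapse {i j : ℕ} (h : RetShell ρ i j) (hop : ρ.op (j - 1) = Op.collapse)
      (hpre : ∃ w w', top2 (ρ.stk i) = some w ∧ top2 (ρ.stk (j - 1)) = some w' ∧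
        w <+: w' ∧ w ≠ w') : RetSeg ρ i j
  | sub {i k j : ℕ} (h : RetShell ρ i j) (hik : i < k) (hkj : k ≤ j)
      (hpop : pop1 (ρ.stk i) = some (ρ.stk k)) (hret : RetSeg ρ k j) : RetSeg ρ i j

/-- The segment `[i,j]` of `ρ` is a level-1-loop. -/
def OneLoopSeg {S : CPS Q A Γ} (ρ : Run S) (i j : ℕ) : Prop :=
  i ≤ j ∧ j ≤ ρ.len ∧
    ∃ (s : Stack2 A) (w : Word A) (s' : Stack2 A),
      ρ.stk i = s ++ [w] ∧ ρ.stk j = s ++ s' ++ [w] ∧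
      (∀ k, i ≤ k → k ≤ j → s.length < (ρ.stk k).length) ∧
      (∀ k, i ≤ k → k ≤ j → 1 < w.length → top2 (ρ.stk k) = some w.dropLast →
        ∃ m, k < m ∧ m ≤ j ∧ RetSeg ρ k m)

/-! ## ExRet, ExLoop, ... -/

/-- `w↓₀` : replace every level-2 link by `0`. -/
def down0 {A : Type} : Word A → Word A :=
  List.map fun a => match a with
    | Sum.inl x => Sum.inl x
    | Sum.inr (x, _) => Sum.inr (x, 0)

def ExRet (S : CPS Q A Γ) (w : Word A) : Set (Q × Q) :=
  {p | ∃ ρ : Run S, ρ.cfg 0 = (p.1, [down0 w, down0 w]) ∧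
    ρ.cfg ρ.len = (p.2, [down0 w]) ∧ RetSeg ρ 0 ρ.len}

def ExLoop (S : CPS Q A Γ) (w : Word A) : Set (Q × Q) :=
  {p | ∃ ρ : Run S, ρ.cfg 0 = (p.1, [down0 w]) ∧ ρ.cfg ρ.len = (p.2, [down0 w]) ∧
    LoopSeg ρ 0 ρ.len}

def ExHLoop (S : CPS Q A Γ) (w : Word A) : Set (Q × Q) :=
  {p | ∃ ρ : Run S, ρ.cfg 0 = (p.1, [down0 w]) ∧ ρ.cfg ρ.len = (p.2, [down0 w]) ∧
    HighLoopSeg ρ 0 ρ.len}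

def ExLLoop (S : CPS Q A Γ) (w : Word A) : Set (Q × Q) :=
  {p | ∃ ρ : Run S, ρ.cfg 0 = (p.1, [down0 w]) ∧ ρ.cfg ρ.len = (p.2, [down0 w]) ∧
    LowLoopSeg ρ 0 ρ.len}

def ExOneLoop (S : CPS Q A Γ) (w : Word A) : Set (Q × Q) :=
  {p | ∃ (ρ : Run S) (s' : Stack2 A), ρ.cfg 0 = (p.1, [down0 w]) ∧
    ρ.cfg ρ.len = (p.2, s' ++ [down0 w]) ∧ OneLoopSeg ρ 0 ρ.len}

/-! ## Finite binary trees -/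

/-- Finite binary trees with labels in `α` and optional left/right children. -/
inductive PTree (α : Type) where
  | node (a : α) (l r : Option (PTree α)) : PTree α

/-- The label of the node at address `d` (`false` = left/0, `true` = right/1). -/
def PTree.labelAt {α : Type} : PTree α → List Bool → Option α
  | .node a _ _, [] => some a
  | .node _ (some t) _, false :: d => t.labelAt d
  | .node _ none _, false :: _ => none
  | .node _ _ (some t), true :: d => t.labelAt d
  | .node _ _ none, true :: _ => none

def PTree.map {α β : Type} (f : α → β) : PTree α → PTree β
  | .node a l r =>
    .node (f a)
      (match l with | none => none | some t => some (t.map f))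
      (match r with | none => none | some t => some (t.map f))

/-- Convolution of two trees, with `none` as padding symbol `□`. -/
def PTree.conv {α β : Type} : PTree α → PTree β → PTree (Option α × Option β)
  | .node a l r, .node b l' r' =>
    .node (some a, some b)
      (match l, l' with
        | none, none => none
        | some t, none => some (t.map fun x => (some x, none))
        | none, some u => some (u.map fun x => (none, some x))
        | some t, some u => some (PTree.conv t u))
      (match r, r' with
        | none, none => none
        | some t, none => some (t.map fun x => (some x, none))
        | none, some u => some (u.map fun x => (none, some x))
        | some t, some u => some (PTree.conv t u))

/-- A (bottom-up nondeterministic) finite tree automaton. -/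
structure TreeAut (α : Type) where
  St : Type
  fin : Finite St
  qI : St
  F : Set St
  Δ : Set (St × α × St × St)

/-- Acceptance of a finite tree by a tree automaton. -/
def TreeAut.Accepts {α : Type} (M : TreeAut α) (t : PTree α) : Prop :=
  ∃ ρ : List Bool → M.St,
    (∀ d, t.labelAt d = none → ρ d = M.qI) ∧
    (∀ d a, t.labelAt d = some a → (ρ d, a, ρ (d ++ [false]), ρ (d ++ [true])) ∈ M.Δ) ∧
    ρ [] ∈ M.F

/-- A family of binary relations on `B` is tree-automatic. -/
def IsTreeAutomatic {B : Type} {I : Type} (E : I → B → B → Prop) : Prop :=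
  ∃ (α : Type) (_ : Finite α) (AB : TreeAut α) (AE : I → TreeAut (Option α × Option α))
    (f : {t : PTree α // AB.Accepts t} → B),
    Function.Bijective f ∧
      ∀ (i : I) (t₁ t₂ : {t : PTree α // AB.Accepts t}),
        (AE i).Accepts (PTree.conv t₁.1 t₂.1) ↔ E i (f t₁) (f t₂)

/-! ## The encoding of configurations as trees -/

/-- Labels of encoding trees: a state, a pair (symbol, link level), or `ε`. -/
abbrev EncLabel (Q A : Type) := Q ⊕ ((A × ℕ) ⊕ Unit)

def epsLab {Q A : Type} : EncLabel Q A := Sum.inr (Sum.inr ())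

def symLab {Q A : Type} (τ : Letter A) : EncLabel Q A := Sum.inr (Sum.inl (symOf τ, lvlOf τ))

/-- Encoding of blocklines as trees (with a fuel parameter driving the recursion;
the fuel used in `encStack` is large enough so that it never runs out on actual
blocklines). The left subtree encodes the blockline induced by the first maximal
block, the right subtree the remaining blocks. -/
def encBL (Q : Type) {A : Type} [DecidableEq A] :
    ℕ → EncLabel Q A → List (Word A) → PTree (EncLabel Q A)
  | 0, σ, _ => .node σ none none
  | _ + 1, σ, [] => .node σ none none
  | fuel + 1, σ, w :: rest =>
    if w.length ≤ 1 then
      match rest with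
      | [] => .node σ none none
      | _ :: _ => .node σ none (some (encBL Q fuel epsLab rest))
    else
      let p : Word A → Bool := fun v => decide (v.take 2 = w.take 2)
      let blk := (w :: rest).takeWhile p
      let restBlk := (w :: rest).dropWhile p
      .node σ
        (some (encBL Q fuel
          (match w[1]? with | some τ' => symLab τ' | none => epsLab)
          (blk.map List.tail)))
        (match restBlk with
          | [] => none
          | _ :: _ => some (encBL Q fuel epsLab restBlk))

/-- The total number of letters of a 2-word. -/
def size2 {A : Type} (s : Stack2 A) : ℕ := (s.map List.length).sum

/-- The encoding `Enc(s) = Enc(s, (⊥,1))` of a stack. -/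
def encStack (Q : Type) {A : Type} [DecidableEq A] (bot : A) (s : Stack2 A) :
    PTree (EncLabel Q A) :=
  encBL Q (size2 s + 1) (Sum.inr (Sum.inl (bot, 1))) s

/-- The encoding of a configuration: the state at the root, `Enc(s)` as left subtree. -/
def Enc {Q A : Type} [DecidableEq A] (bot : A) (c : Q × Stack2 A) : PTree (EncLabel Q A) :=
  .node (Sum.inl c.1) (some (encStack Q bot c.2)) none

/-- The class `EncTrees` of encoding trees. -/
def EncTrees (Q A : Type) (bot : A) : Set (PTree (EncLabel Q A)) :=
  {T | (∃ q : Q, T.labelAt [] = some (Sum.inl q)) ∧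
    T.labelAt [true] = none ∧ T.labelAt [false] ≠ none ∧
    T.labelAt [false] = some (Sum.inr (Sum.inl (bot, 1))) ∧
    (∀ (d : List Bool) (x : EncLabel Q A),
      T.labelAt (false :: (d ++ [false])) = some x →
        ∃ (σ : A) (l : ℕ), σ ≠ bot ∧ (l = 1 ∨ l = 2) ∧ x = Sum.inr (Sum.inl (σ, l))) ∧
    (∀ (d : List Bool) (x : EncLabel Q A), T.labelAt (d ++ [true]) = some x → x = epsLab) ∧
    (∀ (d : List Bool) (σ : A), ¬ (T.labelAt (d ++ [false]) = some (Sum.inr (Sum.inl (σ, 1))) ∧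
      T.labelAt (d ++ [true, false]) = some (Sum.inr (Sum.inl (σ, 1)))))}

/-- Restriction of a tree to the nodes lexicographically ≤ `d`. -/
def restrictLex {α : Type} : PTree α → List Bool → PTree α
  | .node a _ _, [] => .node a none none
  | .node a l _, false :: d =>
      .node a (match l with | none => none | some t => some (restrictLex t d)) none
  | .node a l r, true :: d =>
      .node a l (match r with | none => none | some t => some (restrictLex t d))

/-- The lexicographic order on tree addresses. -/
def lexLe (d e : List Bool) : Prop :=
  d <+: e ∨ ∃ (c x y : List Bool), d = c ++ false :: x ∧ e = c ++ true :: y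

/-! ## Deterministic finite automata with output (Moore machines) -/

structure Moore (α ω : Type) where
  St : Type
  fin : Finite St
  init : St
  step : St → α → St
  out : St → ω

def Moore.output {α ω : Type} (M : Moore α ω) (w : List α) : ω :=
  M.out (w.foldl M.step M.init)

/-! ### Auxiliary lemmas for prefix replacement -/

section PrefixSubstAux

variable {A : Type}

private lemma psub_getLast?_eq_getLastD {α : Type} {l : List α} (d : α) (h : l ≠ []) :
    l.getLast? = some (l.getLastD d) := by
  rw [List.getLastD_eq_getLast?]
  rcases hl : l.getLast? with _ | a
  · exact absurd (List.getLast?_eq_none_iff.mp hl) h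
  · rfl

private lemma psub_dropLast_drop {α : Type} (n : ℕ) (l : List α) :
    (l.drop n).dropLast = l.dropLast.drop n := by
  rw [List.dropLast_eq_take, List.dropLast_eq_take, List.drop_take, List.length_drop]
  congr 1
  omega

private lemma psub_dropLast_map {α β : Type} (f : α → β) (l : List α) :
    (l.map f).dropLast = l.dropLast.map f := by
  rw [List.dropLast_eq_take, List.dropLast_eq_take, ← List.map_take, List.length_map]

private lemma psub_len_pos {s t : Stack2 A} (h : StackPrefix s t) : 0 < s.length :=
  List.length_pos_iff.mpr h.1

private lemma psub_last_prefix {s t : Stack2 A} (h : StackPrefix s t) :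
    s.getLastD [] <+: t.getLastD [] := by
  have h1 : 0 < s.length := psub_len_pos h
  have h2 : s.length ≤ t.length := h.2.1
  have h3 := h.2.2.2 (t.length - 1) (by omega) (by omega)
  rwa [List.getD_eq_getElem?_getD, ← List.getLast?_eq_getElem?,
    ← List.getLastD_eq_getLast?] at h3

private lemma psub_top1_eq {t : Stack2 A} (h : t ≠ []) :
    top1 t = (t.getLastD []).getLast? := by
  unfold top1
  rw [psub_getLast?_eq_getLastD [] h]
  rfl

private lemma psub_getLast? {s u t : Stack2 A} (hk : s.length - 1 < t.length) :
    (substPrefix t s u).getLast? =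
      some (u.getLastD [] ++ (t.getLastD []).drop (s.getLastD []).length) := by
  have htne : t ≠ [] := by
    intro h
    subst h
    simp at hk
  unfold substPrefix
  rw [List.getLast?_append, List.getLast?_map, List.getLast?_drop, if_neg (by omega),
    psub_getLast?_eq_getLastD [] htne]
  rfl

private lemma psub_length {s u t : Stack2 A} (hk : 0 < s.length) (hk2 : s.length ≤ t.length)
    (hlen : s.length = u.length) :
    (substPrefix t s u).length = t.length := by
  simp only [substPrefix, List.length_append, List.length_dropLast, List.length_map,
    List.length_drop]
  omega

private lemma psub_top1 {s u t : Stack2 A} (hps : StackPrefix s t)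
    (hlen : s.length = u.length) (htop : top1 u = top1 s) :
    top1 (substPrefix t s u) = top1 t := by
  have hsp := psub_len_pos hps
  have hst : s.length ≤ t.length := hps.2.1
  have htne : t ≠ [] := by
    intro h; rw [h] at hst; simp only [List.length_nil] at hst; omega
  have hk : s.length - 1 < t.length := by omega
  have hune : u ≠ [] := by
    intro h; rw [h] at hlen; simp only [List.length_nil] at hlen; omega
  have hsne := hps.1
  have hwp : s.getLastD [] <+: t.getLastD [] := psub_last_prefix hps
  have hxw : (u.getLastD []).getLast? = (s.getLastD []).getLast? := by
    rw [psub_top1_eq hune, psub_top1_eq hsne] at htop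
    exact htop
  have h1 : top1 (substPrefix t s u) =
      (u.getLastD [] ++ (t.getLastD []).drop (s.getLastD []).length).getLast? := by
    unfold top1
    rw [psub_getLast? hk]
    rfl
  rw [h1, psub_top1_eq htne, List.getLast?_append, List.getLast?_drop]
  by_cases hcase : (t.getLastD []).length ≤ (s.getLastD []).length
  · rw [if_pos hcase]
    have heq : s.getLastD [] = t.getLastD [] := hwp.eq_of_length_le hcase
    rw [← heq, ← hxw]
    cases hx : (u.getLastD []).getLast? <;> rfl
  · rw [if_neg hcase]
    rcases hlast : (t.getLastD []).getLast? with _ | a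
    · exact absurd (List.getLast?_eq_none_iff.mp hlast)
        (by intro h; rw [h] at hcase; simp at hcase)
    · rfl

private lemma psub_x_last {s u : Stack2 A} (hsne : s ≠ []) (hune : u ≠ [])
    (htop : top1 u = top1 s) :
    (u.getLastD []).getLast? = (s.getLastD []).getLast? := by
  rw [psub_top1_eq hune, psub_top1_eq hsne] at htop
  exact htop

private lemma psub_pop1_eq {t : Stack2 A} {lw : Word A} (h : t.getLast? = some lw) :
    pop1 t = if 1 < lw.length then some (t.dropLast ++ [lw.dropLast]) else none := by
  unfold pop1
  rw [h]

private lemma psub_collapse_inl {t : Stack2 A} {a : A} (h : top1 t = some (Sum.inl a)) :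
    collapse t = pop1 t := by
  unfold collapse
  rw [h]

private lemma psub_collapse_inr {t : Stack2 A} {a : A} {k : ℕ}
    (h : top1 t = some (Sum.inr (a, k))) :
    collapse t = if 0 < k then some (t.take k) else none := by
  unfold collapse
  rw [h]

private lemma psub_pop1 [DecidableEq A] {s u t t' : Stack2 A}
    (hps : StackPrefix s t) (hps' : StackPrefix s t')
    (hlen : s.length = u.length) (htop : top1 u = top1 s)
    (h : pop1 t = some t') :
    pop1 (substPrefix t s u) = some (substPrefix t' s u) := by
  have hsp := psub_len_pos hps
  have hst : s.length ≤ t.length := hps.2.1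
  have htne : t ≠ [] := by
    intro hh; rw [hh] at hst; simp only [List.length_nil] at hst; omega
  have hk : s.length - 1 < t.length := by omega
  have hune : u ≠ [] := by
    intro hh; rw [hh] at hlen; simp only [List.length_nil] at hlen; omega
  have hsne := hps.1
  have hlast : t.getLast? = some (t.getLastD []) := psub_getLast?_eq_getLastD [] htne
  set w := s.getLastD [] with hw
  set x := u.getLastD [] with hx
  set lw := t.getLastD [] with hlw
  rw [psub_pop1_eq hlast] at h
  by_cases hlw1 : 1 < lw.length
  swap
  · rw [if_neg hlw1] at h; exact absurd h (by simp)
  rw [if_pos hlw1] at h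
  have ht' : t' = t.dropLast ++ [lw.dropLast] := by
    injection h with h'
    exact h'.symm
  have hlast' : t'.getLastD [] = lw.dropLast := by
    rw [List.getLastD_eq_getLast?, ht', List.getLast?_concat]
    rfl
  have hwlw' : w <+: lw.dropLast := by
    have := psub_last_prefix hps'
    rwa [hlast'] at this
  have hwlt : w.length < lw.length := by
    have h1 := hwlw'.length_le
    rw [List.length_dropLast] at h1
    omega
  have hxw : x.getLast? = w.getLast? := psub_x_last hsne hune htop
  have hxlenw : w = [] ∨ 0 < x.length := by
    rcases eq_or_ne w [] with hww | hww
    · exact Or.inl hww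
    · right
      have h1 : w.getLast?.isSome := List.getLast?_isSome.mpr hww
      rw [← hxw] at h1
      have h2 : x ≠ [] := fun hh => by
        rw [List.getLast?_eq_none_iff.mpr hh] at h1; simp at h1
      exact List.length_pos_iff.mpr h2
  have hflen : 1 < (x ++ lw.drop w.length).length := by
    rw [List.length_append, List.length_drop]
    rcases hxlenw with hww | hww
    · have : w.length = 0 := by rw [hww]; rfl
      omega
    · omega
  -- compute pop1 of the substituted stack
  rw [psub_pop1_eq (show (substPrefix t s u).getLast? = some (x ++ lw.drop w.length)
    from psub_getLast? hk), if_pos hflen]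
  congr 1
  have hdne : t.drop (s.length - 1) ≠ [] := by
    intro hh
    have h0 := congrArg List.length hh
    simp only [List.length_drop, List.length_nil] at h0
    omega
  have e1 : (substPrefix t s u).dropLast =
      u.dropLast ++ (t.dropLast.drop (s.length - 1)).map
        (fun v => x ++ v.drop w.length) := by
    unfold substPrefix
    rw [List.dropLast_append_of_ne_nil (by simpa using hdne), psub_dropLast_map,
      psub_dropLast_drop]
  have e2 : (x ++ lw.drop w.length).dropLast = x ++ lw.dropLast.drop w.length := by
    have hdne2 : lw.drop w.length ≠ [] := by
      intro hh
      have h0 := congrArg List.length hh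
      simp only [List.length_drop, List.length_nil] at h0
      omega
    rw [List.dropLast_append_of_ne_nil hdne2, psub_dropLast_drop]
  rw [e1, e2, ht']
  unfold substPrefix
  rw [← hw, ← hx]
  rw [List.drop_append_of_le_length (by rw [List.length_dropLast]; omega)]
  rw [List.map_append]
  simp [List.append_assoc]

private lemma psub_applyOp [DecidableEq A] {bot : A} {op : Op A} {s u t t' : Stack2 A}
    (hps : StackPrefix s t) (hps' : StackPrefix s t')
    (hlen : s.length = u.length) (htop : top1 u = top1 s)
    (h : applyOp bot op t = some t') :
    applyOp bot op (substPrefix t s u) = some (substPrefix t' s u) := by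
  have hsp := psub_len_pos hps
  have hst : s.length ≤ t.length := hps.2.1
  have htne : t ≠ [] := by
    intro hh; rw [hh] at hst; simp only [List.length_nil] at hst; omega
  have hk : s.length - 1 < t.length := by omega
  have hune : u ≠ [] := by
    intro hh; rw [hh] at hlen; simp only [List.length_nil] at hlen; omega
  have hsne := hps.1
  have hlast : t.getLast? = some (t.getLastD []) := psub_getLast?_eq_getLastD [] htne
  set w := s.getLastD [] with hw
  set x := u.getLastD [] with hx
  set lw := t.getLastD [] with hlw
  have hwp : w <+: lw := psub_last_prefix hps
  have hwlen : w.length ≤ lw.length := hwp.length_le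
  have hdne : t.drop (s.length - 1) ≠ [] := by
    intro hh
    have h0 := congrArg List.length hh
    simp only [List.length_drop, List.length_nil] at h0
    omega
  have hslen : (substPrefix t s u).length = t.length := psub_length hsp hst hlen
  cases op with
  | clone2 =>
    simp only [applyOp, clone2, top2, hlast, Option.map_some] at h
    injection h with h'
    simp only [applyOp, clone2, top2, psub_getLast? hk, Option.map_some]
    congr 1
    rw [← h']
    unfold substPrefix
    rw [← hw, ← hx]
    rw [List.drop_append_of_le_length (by omega), List.map_append]
    simp [List.append_assoc, hlast]
  | pop2 =>
    simp only [applyOp, pop2] at h ⊢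
    by_cases h1 : 1 < t.length
    swap
    · rw [if_neg h1] at h; exact absurd h (by simp)
    rw [if_pos h1] at h
    injection h with h'
    rw [if_pos (by omega)]
    congr 1
    rw [← h']
    unfold substPrefix
    rw [← hw, ← hx]
    rw [List.dropLast_append_of_ne_nil (by simpa using hdne), psub_dropLast_map,
      psub_dropLast_drop]
  | pop1 =>
    exact psub_pop1 hps hps' hlen htop h
  | push1 a =>
    simp only [applyOp, push1] at h ⊢
    by_cases hb : a = bot
    · rw [if_pos hb] at h; exact absurd h (by simp)
    rw [if_neg hb] at h ⊢
    simp only [top2, hlast, Option.map_some] at h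
    injection h with h'
    rw [show top2 (substPrefix t s u) = some (x ++ lw.drop w.length) from psub_getLast? hk]
    simp only [Option.map_some]
    congr 1
    rw [← h']
    unfold substPrefix
    rw [← hw, ← hx]
    rw [List.drop_append_of_le_length (by rw [List.length_dropLast]; omega),
      List.map_append, List.dropLast_append_of_ne_nil (by simpa using hdne),
      psub_dropLast_map, psub_dropLast_drop]
    simp [List.append_assoc, List.drop_append_of_le_length hwlen]
  | push2 a =>
    simp only [applyOp, push2] at h ⊢
    by_cases hb : a = bot
    · rw [if_pos hb] at h; exact absurd h (by simp)
    rw [if_neg hb] at h ⊢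
    simp only [top2, hlast, Option.map_some] at h
    injection h with h'
    rw [show top2 (substPrefix t s u) = some (x ++ lw.drop w.length) from psub_getLast? hk]
    simp only [Option.map_some, hslen]
    congr 1
    rw [← h']
    unfold substPrefix
    rw [← hw, ← hx]
    rw [List.drop_append_of_le_length (by rw [List.length_dropLast]; omega),
      List.map_append, List.dropLast_append_of_ne_nil (by simpa using hdne),
      psub_dropLast_map, psub_dropLast_drop]
    simp [List.append_assoc, List.drop_append_of_le_length hwlen]
  | collapse =>
    have htt1 : top1 t = lw.getLast? := psub_top1_eq htne
    rcases hl : lw.getLast? with _ | c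
    · rw [applyOp, collapse, htt1, hl] at h; exact absurd h (by simp)
    have ht1 : top1 t = some c := by rw [htt1, hl]
    have ht1' : top1 (substPrefix t s u) = some c := by
      rw [psub_top1 hps hlen htop, ht1]
    show collapse (substPrefix t s u) = some (substPrefix t' s u)
    replace h : collapse t = some t' := h
    cases c with
    | inl a =>
      rw [psub_collapse_inl ht1] at h
      rw [psub_collapse_inl ht1']
      exact psub_pop1 hps hps' hlen htop h
    | inr p =>
      obtain ⟨a, k'⟩ := p
      rw [psub_collapse_inr ht1] at h
      rw [psub_collapse_inr ht1']
      by_cases hk' : 0 < k'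
      swap
      · rw [if_neg hk'] at h; exact absurd h (by simp)
      rw [if_pos hk'] at h ⊢
      injection h with h'
      have hk's : s.length ≤ k' := by
        have := hps'.2.1
        rw [← h', List.length_take] at this
        omega
      congr 1
      rw [← h']
      unfold substPrefix
      rw [← hw, ← hx]
      rw [List.take_append,
        List.take_of_length_le (by rw [List.length_dropLast]; omega),
        ← List.map_take, List.drop_take, List.length_dropLast]
      congr 3
      omega

end PrefixSubstAux

/-- Prefix replacement: if `s ⊑ ρ`, `TOP₁(u) = TOP₁(s)`, `|s| = |u|`
and `t[s/u]` is a stack (for `ρ(0) = (q,t)`), then `ρ[s/u]` is a run of `S`. -/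
theorem prefix_replacement_run
    {Q A Γ : Type} [DecidableEq A] (S : CPS Q A Γ) (ρ : Run S)
    (s u : Stack2 A) (hs : IsStack S.bot s) (hu : IsStack S.bot u)
    (hpre : ∀ i, i ≤ ρ.len → StackPrefix s (ρ.stk i))
    (htop : top1 u = top1 s)
    (hlen : s.length = u.length)
    (hstack : IsStack S.bot (substPrefix (ρ.stk 0) s u)) :
    ∃ ρ' : Run S, ρ'.len = ρ.len ∧
      ∀ i, i ≤ ρ.len → ρ'.cfg i = ((ρ.cfg i).1, substPrefix (ρ.stk i) s u) := by
  refine ⟨⟨ρ.len, fun i => ((ρ.cfg i).1, substPrefix (ρ.stk i) s u), ρ.lab, ρ.op, ?_⟩,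
    rfl, fun i _ => rfl⟩
  intro i hi
  obtain ⟨σ, hsym, hmem, happ⟩ := ρ.ok i hi
  refine ⟨σ, ?_, hmem, ?_⟩
  · show symS (substPrefix (ρ.stk i) s u) = some σ
    unfold symS at hsym ⊢
    rwa [psub_top1 (hpre i (by omega)) hlen htop]
  · exact psub_applyOp (hpre i (by omega)) (hpre (i + 1) (by omega)) hlen htop happ

end CPG
end

section
/- The encoding map Enc : Q × Stacks(Σ) → EncTrees, sending a configuration (q,s) to the tree with root labelled q and left subtree Enc(s,(⊥,1)), is a bijection. -/
namespace CPG

variable {Q A Γ : Type} [DecidableEq A]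

/-! ## Auxiliary development for `enc_bijective` -/

section EncBij

namespace PTree

def lab {α : Type} : PTree α → α | .node a _ _ => a
def lft {α : Type} : PTree α → Option (PTree α) | .node _ l _ => l
def rgt {α : Type} : PTree α → Option (PTree α) | .node _ _ r => r

def psize {α : Type} : PTree α → ℕ
  | .node _ l r =>
      1 + (match l with | none => 0 | some t => psize t)
        + (match r with | none => 0 | some t => psize t)

@[simp] theorem lab_node {α : Type} (a : α) (l r) : (PTree.node a l r).lab = a := rfl
@[simp] theorem lft_node {α : Type} (a : α) (l r) : (PTree.node a l r).lft = l := rfl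
@[simp] theorem rgt_node {α : Type} (a : α) (l r) : (PTree.node a l r).rgt = r := rfl

theorem eta {α : Type} (t : PTree α) : t = .node t.lab t.lft t.rgt := by
  cases t; rfl

@[simp] theorem psize_node {α : Type} (a : α) (l r) :
    (PTree.node a l r).psize =
      1 + (match l with | none => 0 | some t => psize t)
        + (match r with | none => 0 | some t => psize t) := by
  rw [psize.eq_def]

theorem psize_lt_left {α : Type} (a : α) (t r) :
    psize t < (PTree.node a (some t) r).psize := by
  cases r <;> simp [psize_node] <;> omega

theorem psize_lt_right {α : Type} (a : α) (l t) :
    psize t < (PTree.node a l (some t)).psize := by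
  cases l <;> simp [psize_node] <;> omega

@[simp] theorem labelAt_nil {α : Type} (a : α) (l r) :
    (PTree.node a l r).labelAt [] = some a := by simp [PTree.labelAt]
@[simp] theorem labelAt_false_some {α : Type} (a : α) (t : PTree α) (r d) :
    (PTree.node a (some t) r).labelAt (false :: d) = t.labelAt d := by simp [PTree.labelAt]
@[simp] theorem labelAt_false_none {α : Type} (a : α) (r) (d : List Bool) :
    (PTree.node a none r).labelAt (false :: d) = none := by simp [PTree.labelAt]
@[simp] theorem labelAt_true_some {α : Type} (a : α) (l) (t : PTree α) (d) :
    (PTree.node a l (some t)).labelAt (true :: d) = t.labelAt d := by simp [PTree.labelAt]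
@[simp] theorem labelAt_true_none {α : Type} (a : α) (l) (d : List Bool) :
    (PTree.node a l none).labelAt (true :: d) = none := by simp [PTree.labelAt]

end PTree

set_option linter.unusedSectionVars false

variable {Q A : Type} [DecidableEq A]

/-! ### lcp lemmas -/

theorem lcp_prefix_left : ∀ x y : List (Letter A), lcp x y <+: x
  | [], _ => by simp [lcp]
  | a :: s, [] => by simp [lcp]
  | a :: s, b :: t => by
      by_cases h : a = b
      · simpa [lcp, h] using lcp_prefix_left s t
      · simp [lcp, h]

theorem lcp_prefix_right : ∀ x y : List (Letter A), lcp x y <+: y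
  | [], _ => by simp [lcp]
  | a :: s, [] => by simp [lcp]
  | a :: s, b :: t => by
      by_cases h : a = b
      · simpa [lcp, h] using lcp_prefix_right s t
      · simp [lcp, h]

theorem le_lcp_of_take_eq :
    ∀ (x y : List (Letter A)) (m : ℕ), m ≤ x.length → x.take m = y.take m →
      m ≤ (lcp x y).length
  | _, _, 0, _, _ => Nat.zero_le _
  | [], _, m + 1, hm, _ => by simp at hm
  | a :: s, [], m + 1, hm, h => by simp at h
  | a :: s, b :: t, m + 1, hm, h => by
      simp only [List.take_succ_cons, List.cons.injEq] at h
      obtain ⟨rfl, h2⟩ := h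
      have hl : lcp (a :: s) (a :: t) = a :: lcp s t := by simp [lcp]
      rw [hl]
      have := le_lcp_of_take_eq s t m (by simpa using hm) h2
      simpa using Nat.succ_le_succ this

/-! ### size2 lemmas -/

@[simp] theorem size2_nil : size2 ([] : Stack2 A) = 0 := rfl
@[simp] theorem size2_cons (w : Word A) (l : Stack2 A) :
    size2 (w :: l) = w.length + size2 l := by simp [size2]
theorem size2_append (x y : Stack2 A) : size2 (x ++ y) = size2 x + size2 y := by
  simp [size2]

theorem getElem?_some_lt {α : Type} {l : List α} {n : ℕ} {a : α} (h : l[n]? = some a) :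
    n < l.length := by
  rcases List.getElem?_eq_some_iff.mp h with ⟨h, -⟩; exact h

theorem getLast?_eq_getLastD {α : Type} (x : List α) (d : α) (hx : x ≠ []) :
    x.getLast? = some (x.getLastD d) := by
  cases x with
  | nil => exact absurd rfl hx
  | cons c t => rw [List.getLastD_eq_getLast?]
                cases e : (c :: t).getLast? with
                | none => simp at e
                | some z => rfl

/-! ### Generic list helpers -/


theorem mem_getElem? {α : Type} {l : List α} {x : α} (h : x ∈ l) :
    ∃ n : ℕ, l[n]? = some x := by
  obtain ⟨n, hn, e⟩ := List.getElem_of_mem h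
  exact ⟨n, by rw [List.getElem?_eq_getElem hn, e]⟩

theorem head?_of_take2 {α : Type} {w v : List α} {a b : α}
    (hw : w.take 2 = [a, b]) (hv : v.take 2 = w.take 2) :
    v.head? = some a ∧ v[1]? = some b ∧ 2 ≤ v.length := by
  rw [hw] at hv
  match v, hv with
  | c :: d :: v', hv =>
    simp only [List.take_succ_cons, List.take_zero, List.cons.injEq] at hv
    obtain ⟨rfl, rfl, -⟩ := hv
    exact ⟨rfl, by simp, by simp⟩

theorem take2_of_head {α : Type} {w : List α} {a b : α}
    (h0 : w.head? = some a) (h1 : w[1]? = some b) : w.take 2 = [a, b] := by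
  match w, h0, h1 with
  | c :: d :: v', h0, h1 =>
    simp only [List.head?_cons, Option.some.injEq] at h0
    have h1' : d = b := by simpa using h1
    simp [h0, h1']

/-! ### Good blocklines -/

/-- The invariant satisfied by a blockline of a reachable stack:
`l` is a list of word-suffixes of consecutive stack words (starting at global
word index `n`, 0-based), all starting with the same letter `τ`, such that no
symbol in a tail is `bot` and all level-2 links are canonical. -/
structure GoodBL (bot : A) (τ : Letter A) (n : ℕ) (l : Stack2 A) : Prop where
  ne : l ≠ []
  heads : ∀ w ∈ l, w.head? = some τ
  syms : ∀ w ∈ l, ∀ x ∈ w.tail, symOf x ≠ bot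
  first : ∀ a k, Sum.inr (a, k) ∈ (l.headD []).tail → k = n
  links : ∀ i (w w' : Word A), l[i]? = some w → l[i + 1]? = some w' → ∀ j a k,
      w'[j + 1]? = some (Sum.inr (a, k)) → k = n + i + 1 ∨ w'.take (j + 2) = w.take (j + 2)

theorem GoodBL.word_ne (h : GoodBL (A := A) bot τ n l) {w} (hw : w ∈ l) : w ≠ [] := by
  intro e; have := h.heads w hw; rw [e] at this; simp at this

theorem GoodBL.head_eq (h : GoodBL (A := A) bot τ n l) {w} (hw : w ∈ l) : w = τ :: w.tail := by
  have := h.heads w hw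
  cases w with
  | nil => simp at this
  | cons c t => simp only [List.head?_cons, Option.some.injEq] at this; rw [this]; rfl

/-- Restriction to a later part of the blockline. -/
theorem GoodBL.drop_part (h : GoodBL (A := A) bot τ n l) (x y : Stack2 A)
    (hxy : l = x ++ y) (hx : x ≠ []) (hy : y ≠ [])
    (hb : 2 ≤ (y.headD []).length → (y.headD []).take 2 ≠ (x.getLastD []).take 2) :
    GoodBL bot τ (n + x.length) y := by
  subst hxy
  have hidx : ∀ i : ℕ, (x ++ y)[x.length + i]? = y[i]? := by
    intro i
    rw [List.getElem?_append_right (by omega)]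
    congr 1; omega
  have hxl : (x ++ y)[x.length - 1]? = some (x.getLastD []) := by
    rw [List.getElem?_append_left (by have := List.length_pos_iff.mpr hx; omega)]
    rw [← List.getLast?_eq_getElem?]
    exact getLast?_eq_getLastD x [] hx
  obtain ⟨yh, yt, rfl⟩ : ∃ yh yt, y = yh :: yt := by
    cases y with
    | nil => exact absurd rfl hy
    | cons c t => exact ⟨c, t, rfl⟩
  constructor
  · simp
  · intro w hw; exact h.heads w (by simp [hw])
  · intro w hw; exact h.syms w (by simp [hw])
  · -- first
    intro a k hk
    simp only [List.headD_cons] at hk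
    obtain ⟨j, hj⟩ := mem_getElem? hk
    rw [List.getElem?_tail] at hj
    have h0 : (x ++ yh :: yt)[x.length + 0]? = some yh := by rw [hidx]; simp
    have := h.links (x.length - 1) (x.getLastD []) yh hxl
      (by have := List.length_pos_iff.mpr hx; rw [show x.length - 1 + 1 = x.length + 0 by omega]; exact h0)
      j a k hj
    rcases this with h1 | h1
    · have := List.length_pos_iff.mpr hx; omega
    · exfalso
      have hlen : j + 2 ≤ yh.length := by
        have := getElem?_some_lt hj
        omega
      have h2 : yh.take 2 = (x.getLastD []).take 2 := by
        have h3 := congrArg (List.take 2) h1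
        rwa [List.take_take, List.take_take,
          Nat.min_eq_left (show 2 ≤ j + 2 by omega)] at h3
      exact hb (by simp only [List.headD_cons]; omega) (by simpa using h2)
  · -- links
    intro i w w' hw hw' j a k hk
    have := h.links (x.length + i) w w' (by rw [hidx]; exact hw)
      (by rw [show x.length + i + 1 = x.length + (i+1) by omega, hidx]; exact hw') j a k hk
    rcases this with h1 | h1
    · left; omega
    · right; exact h1

/-- Restriction to the blockline induced by the first block. -/
theorem GoodBL.block_part (h : GoodBL (A := A) bot τ n l) {w : Word A} {rest : Stack2 A}
    (hl : l = w :: rest) {τ1 : Letter A} (hw1 : w[1]? = some τ1) :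
    GoodBL bot τ1 n ((l.takeWhile (fun v => decide (v.take 2 = w.take 2))).map List.tail) := by
  have hw2 : w.take 2 = [τ, τ1] :=
    take2_of_head (by have := h.heads w (by simp [hl]); exact this) hw1
  set p : Word A → Bool := fun v => decide (v.take 2 = w.take 2) with hp
  have hmemblk : ∀ v ∈ l.takeWhile p, v.take 2 = [τ, τ1] := by
    intro v hv
    have := List.mem_takeWhile_imp hv
    rw [hp] at this; simp only [decide_eq_true_eq] at this
    rw [this, hw2]
  have hblkpre : l.takeWhile p <+: l := List.takeWhile_prefix p
  have hblk_ne : l.takeWhile p ≠ [] := by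
    rw [hl]
    have : p w = true := by rw [hp]; simp
    simp [List.takeWhile, this]
  have hshape : ∀ v ∈ l.takeWhile p, v.head? = some τ ∧ v[1]? = some τ1 ∧ 2 ≤ v.length := by
    intro v hv
    exact head?_of_take2 (by rw [hw2]) (by rw [hmemblk v hv, hw2])
  constructor
  · simpa using hblk_ne
  · intro u hu
    obtain ⟨v, hv, rfl⟩ := List.mem_map.mp hu
    obtain ⟨h0, h1, h2⟩ := hshape v hv
    match v, h1 with
    | c :: d :: v', h1 => simpa using h1
  · intro u hu x hx
    obtain ⟨v, hv, rfl⟩ := List.mem_map.mp hu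
    exact h.syms v (hblkpre.subset hv) x (List.mem_of_mem_tail hx)
  · -- first
    intro a k hk
    have hhd : (l.takeWhile p).headD [] = w := by
      rw [hl]
      have : p w = true := by rw [hp]; simp
      simp [List.takeWhile, this]
    have : ((l.takeWhile p).map List.tail).headD [] = w.tail := by
      cases e : l.takeWhile p with
      | nil => exact absurd e hblk_ne
      | cons c t => rw [e] at hhd; simp at hhd; simp [hhd]
    rw [this] at hk
    have : Sum.inr (a, k) ∈ (l.headD []).tail := by
      rw [hl]; simpa using List.mem_of_mem_tail hk
    exact h.first a k this
  · -- links
    intro i u u' hu hu' j a k hk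
    rw [List.getElem?_map] at hu hu'
    cases e : (l.takeWhile p)[i]? with
    | none => rw [e] at hu; simp at hu
    | some v =>
      cases e' : (l.takeWhile p)[i+1]? with
      | none => rw [e'] at hu'; simp at hu'
      | some v' =>
        rw [e] at hu; rw [e'] at hu'
        simp only [Option.map_some, Option.some.injEq] at hu hu'
        subst hu; subst hu'
        have hvl : l[i]? = some v := by
          obtain ⟨r, hr⟩ := hblkpre
          rw [← hr, List.getElem?_append_left (getElem?_some_lt e)]
          exact e
        have hvl' : l[i+1]? = some v' := by
          obtain ⟨r, hr⟩ := hblkpre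
          rw [← hr, List.getElem?_append_left (getElem?_some_lt e')]
          exact e'
        have hk' : v'[j+2]? = some (Sum.inr (a,k)) := by
          rw [← List.getElem?_tail]; exact hk
        have := h.links i v v' hvl hvl' (j+1) a k hk'
        rcases this with h1 | h1
        · left; exact h1
        · right
          have := congrArg List.tail h1
          have hv'3 : (v'.take (j+3)).tail = v'.tail.take (j+2) := by
            cases v' <;> simp
          have hv3 : (v.take (j+3)).tail = v.tail.take (j+2) := by
            cases v <;> simp
          rw [show j+1+2 = j+3 by omega] at this
          rw [hv'3, hv3] at this
          exact this

/-- Appending a copy of the last word (clone₂). -/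
theorem GoodBL.clone (h : GoodBL (A := A) bot τ n l) {w : Word A}
    (hw : l.getLast? = some w) : GoodBL bot τ n (l ++ [w]) := by
  have hwl : w ∈ l := List.mem_of_getElem? (by rw [← List.getLast?_eq_getElem?]; exact hw)
  have hlast : l[l.length - 1]? = some w := by rw [← List.getLast?_eq_getElem?]; exact hw
  have hne := h.ne
  have hpos := List.length_pos_iff.mpr hne
  constructor
  · simp
  · intro u hu; rcases List.mem_append.mp hu with h1 | h1
    · exact h.heads u h1
    · simp at h1; rw [h1]; exact h.heads w hwl
  · intro u hu; rcases List.mem_append.mp hu with h1 | h1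
    · exact h.syms u h1
    · simp at h1; rw [h1]; exact h.syms w hwl
  · intro a k hk
    apply h.first a k
    rwa [show (l ++ [w]).headD [] = l.headD [] by
      cases l with | nil => exact absurd rfl hne | cons c t => simp]  at hk
  · intro i u u' hu hu' j a k hk
    by_cases hi : i + 1 < l.length
    · exact h.links i u u' (by rw [← List.getElem?_append_left (by omega)]; exact hu)
        (by rw [← List.getElem?_append_left hi]; exact hu') j a k hk
    · by_cases hi2 : i + 1 = l.length
      · right
        have hu2 : u = w := by
          rw [List.getElem?_append_left (by omega), show i = l.length - 1 by omega, hlast] at hu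
          exact (Option.some.injEq _ _ ▸ hu).symm
        have hu'2 : u' = w := by
          rw [List.getElem?_append_right (by omega), show i + 1 - l.length = 0 by omega] at hu'
          simpa using hu'.symm
        rw [hu2, hu'2]
      · exfalso
        rw [List.getElem?_append_right (by omega)] at hu'
        have : i + 1 - l.length ≥ 1 := by omega
        rw [List.getElem?_eq_none (by simpa using this)] at hu'
        exact nomatch hu'

/-- Pushing a letter onto the topmost word. -/
theorem GoodBL.push (h : GoodBL (A := A) bot τ n (u ++ [w])) {x : Letter A}
    (hsym : symOf x ≠ bot) (hlink : ∀ a k, x = Sum.inr (a, k) → k = n + u.length) :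
    GoodBL bot τ n (u ++ [w ++ [x]]) := by
  have hwmem : w ∈ u ++ [w] := by simp
  have hwne : w ≠ [] := h.word_ne hwmem
  constructor
  · simp
  · intro v hv; rcases List.mem_append.mp hv with h1 | h1
    · exact h.heads v (by simp [h1])
    · simp at h1; subst h1
      rw [List.head?_append_of_ne_nil _ hwne]
      exact h.heads w hwmem
  · intro v hv x' hx'
    rcases List.mem_append.mp hv with h1 | h1
    · exact h.syms v (by simp [h1]) x' hx'
    · simp at h1; subst h1
      rw [show (w ++ [x]).tail = w.tail ++ [x] by cases w with
        | nil => exact absurd rfl hwne | cons c t => simp] at hx'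
      rcases List.mem_append.mp hx' with h2 | h2
      · exact h.syms w hwmem x' h2
      · simp at h2; subst h2; exact hsym
  · intro a k hk
    cases u with
    | nil =>
      simp only [List.nil_append, List.headD_cons] at hk ⊢
      rw [show (w ++ [x]).tail = w.tail ++ [x] by cases w with
        | nil => exact absurd rfl hwne | cons c t => simp] at hk
      rcases List.mem_append.mp hk with h2 | h2
      · exact h.first a k (by simpa using h2)
      · simp at h2
        have := hlink a k h2.symm
        simpa using this
    | cons c t =>
      apply h.first a k
      simpa using hk
  · intro i v v' hv hv' j a k hk
    by_cases hi : i + 1 < u.length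
    · rw [List.getElem?_append_left (show i < u.length by omega)] at hv
      rw [List.getElem?_append_left (show i + 1 < u.length by omega)] at hv'
      exact h.links i v v'
        (by rw [List.getElem?_append_left (show i < u.length by omega)]; exact hv)
        (by rw [List.getElem?_append_left (show i + 1 < u.length by omega)]; exact hv') j a k hk
    · by_cases hi2 : i + 1 = u.length
      · -- the pair (last of u, new top word)
        rw [List.getElem?_append_left (show i < u.length by omega)] at hv
        rw [List.getElem?_append_right (by omega), show i + 1 - u.length = 0 by omega] at hv'
        simp only [List.getElem?_cons_zero, Option.some.injEq] at hv'
        subst hv'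
        by_cases hj : j + 1 < w.length
        · have hk2 : w[j+1]? = some (Sum.inr (a,k)) := by
            rw [List.getElem?_append_left hj] at hk; exact hk
          have := h.links i v w (by rw [List.getElem?_append_left (by omega)]; exact hv)
            (by rw [List.getElem?_append_right (by omega), show i + 1 - u.length = 0 by omega]
                simp) j a k hk2
          rcases this with h1 | h1
          · left; exact h1
          · right
            rw [List.take_append_of_le_length (by omega)]
            exact h1
        · by_cases hj2 : j + 1 = w.length
          · left
            rw [List.getElem?_append_right (by omega), show j + 1 - w.length = 0 by omega] at hk
            simp only [List.getElem?_cons_zero, Option.some.injEq] at hk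
            have := hlink a k hk
            omega
          · exfalso
            rw [List.getElem?_eq_none (by simp; omega)] at hk
            exact nomatch hk
      · exfalso
        rw [List.getElem?_append_right (by omega)] at hv'
        rw [List.getElem?_eq_none (by simp; omega)] at hv'
        exact nomatch hv'

/-- Removing the last letter of the topmost word (pop₁). -/
theorem GoodBL.pop1' (h : GoodBL (A := A) bot τ n (u ++ [w])) (hw2 : 2 ≤ w.length) :
    GoodBL bot τ n (u ++ [w.dropLast]) := by
  have hwmem : w ∈ u ++ [w] := by simp
  have hdl : w.dropLast = w.take (w.length - 1) := List.dropLast_eq_take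
  have hdlh : w.dropLast.head? = w.head? := by
    match w, hw2 with
    | c :: d :: t, _ => rw [List.dropLast_cons_of_ne_nil (by simp)]; rfl
  constructor
  · simp
  · intro v hv; rcases List.mem_append.mp hv with h1 | h1
    · exact h.heads v (by simp [h1])
    · simp at h1; subst h1; rw [hdlh]; exact h.heads w hwmem
  · intro v hv x hx
    rcases List.mem_append.mp hv with h1 | h1
    · exact h.syms v (by simp [h1]) x hx
    · simp at h1; subst h1
      apply h.syms w hwmem
      have : w.dropLast.tail = w.tail.dropLast := by
        match w, hw2 with
        | c :: d :: t, _ => rw [List.dropLast_cons_of_ne_nil (by simp)]; rfl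
      rw [this] at hx
      exact (List.dropLast_sublist _).subset hx
  · intro a k hk
    cases u with
    | nil =>
      apply h.first a k
      simp only [List.nil_append, List.headD_cons] at hk ⊢
      have : w.dropLast.tail = w.tail.dropLast := by
        match w, hw2 with
        | c :: d :: t, _ => rw [List.dropLast_cons_of_ne_nil (by simp)]; rfl
      rw [this] at hk
      exact (List.dropLast_sublist _).subset hk
    | cons c t => apply h.first a k; simpa using hk
  · intro i v v' hv hv' j a k hk
    by_cases hi : i + 1 < u.length
    · rw [List.getElem?_append_left (show i < u.length by omega)] at hv
      rw [List.getElem?_append_left (show i + 1 < u.length by omega)] at hv'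
      exact h.links i v v'
        (by rw [List.getElem?_append_left (show i < u.length by omega)]; exact hv)
        (by rw [List.getElem?_append_left (show i + 1 < u.length by omega)]; exact hv') j a k hk
    · by_cases hi2 : i + 1 = u.length
      · rw [List.getElem?_append_left (show i < u.length by omega)] at hv
        rw [List.getElem?_append_right (by omega), show i + 1 - u.length = 0 by omega] at hv'
        simp only [List.getElem?_cons_zero, Option.some.injEq] at hv'
        subst hv'
        have hjlt : j + 1 < w.length - 1 := by
          have := getElem?_some_lt hk
          simp only [List.length_dropLast] at this
          omega
        have hk2 : w[j+1]? = some (Sum.inr (a,k)) := by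
          rw [hdl, List.getElem?_take, if_pos (by omega)] at hk; exact hk
        have := h.links i v w (by rw [List.getElem?_append_left (by omega)]; exact hv)
          (by rw [List.getElem?_append_right (by omega), show i + 1 - u.length = 0 by omega]
              simp) j a k hk2
        rcases this with h1 | h1
        · left; exact h1
        · right
          rw [hdl, List.take_take, Nat.min_eq_left (show j + 2 ≤ w.length - 1 by omega)]
          exact h1
      · exfalso
        rw [List.getElem?_append_right (by omega)] at hv'
        rw [List.getElem?_eq_none (by simp; omega)] at hv'
        exact nomatch hv'

/-- Taking a prefix of the blockline (pop₂ / collapse). -/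
theorem GoodBL.take_part (h : GoodBL (A := A) bot τ n l) {m : ℕ} (hm : 1 ≤ m) :
    GoodBL bot τ n (l.take m) := by
  have hne := h.ne
  constructor
  · cases l with
    | nil => exact absurd rfl hne
    | cons c t => cases m with
      | zero => omega
      | succ m => simp
  · intro v hv; exact h.heads v ((List.take_prefix m l).subset hv)
  · intro v hv; exact h.syms v ((List.take_prefix m l).subset hv)
  · intro a k hk
    apply h.first a k
    cases l with
    | nil => exact absurd rfl hne
    | cons c t => cases m with
      | zero => omega
      | succ m => simpa using hk
  · intro i v v' hv hv' j a k hk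
    have hi : i + 1 < m := by
      have := getElem?_some_lt hv'
      simp at this
      omega
    exact h.links i v v' (by rw [List.getElem?_take, if_pos (by omega)] at hv; exact hv)
      (by rw [List.getElem?_take, if_pos hi] at hv'; exact hv') j a k hk

/-! ### Characterisation of reachable stacks -/

theorem eq_dropLast_concat {α : Type} {l : List α} {w : α} (h : l.getLast? = some w) :
    l = l.dropLast ++ [w] := by
  cases l with
  | nil => simp at h
  | cons c t =>
    have hne : c :: t ≠ [] := by simp
    have := List.dropLast_append_getLast hne
    rw [List.getLast?_eq_getLast hne] at h
    simp only [Option.some.injEq] at h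
    rw [h] at this
    exact this.symm

/-- `GoodSt bot s` : the stack `s` is well-formed. -/
def GoodSt (bot : A) (s : Stack2 A) : Prop := GoodBL bot (Sum.inl bot) 0 s

theorem goodSt_bottom (bot : A) : GoodSt bot (bottom2 bot) := by
  constructor
  · simp [bottom2]
  · intro w hw; simp [bottom2] at hw; simp [hw]
  · intro w hw x hx; simp [bottom2] at hw; subst hw; simp at hx
  · intro a k hk; simp [bottom2] at hk
  · intro i w w' hw hw' j a k hk
    exfalso
    have := getElem?_some_lt hw'
    simp [bottom2] at this

theorem IsStack.goodSt {bot : A} {s : Stack2 A} (h : IsStack bot s) : GoodSt bot s := by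
  induction h with
  | base => exact goodSt_bottom bot
  | @step s t op h1 h2 ih =>
    cases op with
    | clone2 =>
      simp only [applyOp, CPG.clone2, top2] at h2
      cases e : s.getLast? with
      | none => rw [e] at h2; simp at h2
      | some w =>
        rw [e] at h2; simp only [Option.map_some, Option.some.injEq] at h2
        rw [← h2]; exact ih.clone e
    | pop1 =>
      simp only [applyOp, CPG.pop1] at h2
      split at h2
      next w e =>
        split at h2
        next hlen =>
          simp only [Option.some.injEq] at h2
          rw [← h2]
          have hs := eq_dropLast_concat e
          have ih' : GoodBL bot (Sum.inl bot) 0 (s.dropLast ++ [w]) := by rwa [← hs]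
          exact ih'.pop1' (by omega)
        next hlen => exact nomatch h2
      next e => exact nomatch h2
    | pop2 =>
      simp only [applyOp, CPG.pop2] at h2
      by_cases hlen : 1 < s.length
      · rw [if_pos hlen] at h2
        simp only [Option.some.injEq] at h2
        rw [← h2, List.dropLast_eq_take]
        exact ih.take_part (by omega)
      · rw [if_neg hlen] at h2; exact nomatch h2
    | collapse =>
      simp only [applyOp, CPG.collapse] at h2
      split at h2
      next a k e =>
        split at h2
        next hk =>
          simp only [Option.some.injEq] at h2
          rw [← h2]
          exact ih.take_part (by omega)
        next hk => exact nomatch h2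
      next a e =>
        simp only [CPG.pop1] at h2
        split at h2
        next w e2 =>
          split at h2
          next hlen =>
            simp only [Option.some.injEq] at h2
            rw [← h2]
            have hs := eq_dropLast_concat e2
            have ih' : GoodBL bot (Sum.inl bot) 0 (s.dropLast ++ [w]) := by rwa [← hs]
            exact ih'.pop1' (by omega)
          next hlen => exact nomatch h2
        next e2 => exact nomatch h2
      next e => exact nomatch h2
    | push1 a =>
      simp only [applyOp, CPG.push1, top2] at h2
      by_cases ha : a = bot
      · rw [if_pos ha] at h2; exact nomatch h2
      · rw [if_neg ha] at h2
        cases e : s.getLast? with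
        | none => rw [e] at h2; simp at h2
        | some w =>
          rw [e] at h2; simp only [Option.map_some, Option.some.injEq] at h2
          rw [← h2]
          have hs := eq_dropLast_concat e
          have ih' : GoodBL bot (Sum.inl bot) 0 (s.dropLast ++ [w]) := by rwa [← hs]
          exact ih'.push (by simpa [symOf] using ha) (by intro a' k' h'; exact nomatch h')
    | push2 a =>
      simp only [applyOp, CPG.push2, top2] at h2
      by_cases ha : a = bot
      · rw [if_pos ha] at h2; exact nomatch h2
      · rw [if_neg ha] at h2
        cases e : s.getLast? with
        | none => rw [e] at h2; simp at h2
        | some w =>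
          rw [e] at h2; simp only [Option.map_some, Option.some.injEq] at h2
          rw [← h2]
          have hs := eq_dropLast_concat e
          have ih' : GoodBL bot (Sum.inl bot) 0 (s.dropLast ++ [w]) := by rwa [← hs]
          have hslen : s ≠ [] := ih.ne
          apply ih'.push (by simpa [symOf] using ha)
          intro a' k' h'
          simp only [Sum.inr.injEq, Prod.mk.injEq] at h'
          rw [← h'.2]
          have : s.dropLast.length = s.length - 1 := by simp
          omega

/-- Pushing a word letter by letter. -/
theorem pushWord {bot : A} : ∀ (v : Word A) (u : Stack2 A) (w : Word A),
    IsStack bot (u ++ [w]) → w ≠ [] →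
    (∀ x ∈ v, symOf x ≠ bot) → (∀ a k, Sum.inr (a, k) ∈ v → k = u.length) →
    IsStack bot (u ++ [w ++ v])
  | [], u, w, h, _, _, _ => by simpa using h
  | x :: v, u, w, h, hw, hsym, hlink => by
    have hx : IsStack bot (u ++ [w ++ [x]]) := by
      cases x with
      | inl a =>
        refine IsStack.step (Op.push1 a) h ?_
        have ha : a ≠ bot := by
          have := hsym (Sum.inl a) (by simp)
          simpa [symOf] using this
        simp only [applyOp, CPG.push1, if_neg ha, top2, List.getLast?_concat,
          Option.map_some, List.dropLast_concat]
      | inr ak =>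
        obtain ⟨a, k⟩ := ak
        have hk : k = u.length := hlink a k (by simp)
        have ha : a ≠ bot := by
          have := hsym (Sum.inr (a, k)) (by simp)
          simpa [symOf] using this
        refine IsStack.step (Op.push2 a) h ?_
        simp only [applyOp, CPG.push2, if_neg ha, top2, List.getLast?_concat,
          Option.map_some, List.dropLast_concat, Option.some.injEq]
        rw [hk]
        simp
    have := pushWord v u (w ++ [x]) hx (by simp)
      (fun y hy => hsym y (by simp [hy])) (fun a k hk => hlink a k (by simp [hk]))
    simpa using this

/-- Popping the topmost word down to a nonempty prefix. -/
theorem popTo {bot : A} : ∀ (m : ℕ) (u : Stack2 A) (w : Word A),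
    IsStack bot (u ++ [w]) → ∀ p, p <+: w → p ≠ [] → w.length ≤ p.length + m →
    IsStack bot (u ++ [p])
  | 0, u, w, h, p, hp, hpne, hlen => by
    have : p = w := hp.eq_of_length_le (by omega)
    rwa [this]
  | m + 1, u, w, h, p, hp, hpne, hlen => by
    by_cases hw : w.length ≤ p.length
    · have : p = w := hp.eq_of_length_le hw
      rwa [this]
    · have hplen := List.length_pos_iff.mpr hpne
      have hw2 : 1 < w.length := by
        have := hp.length_le
        omega
      have hstep : IsStack bot (u ++ [w.dropLast]) := by
        refine IsStack.step Op.pop1 h ?_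
        simp only [applyOp, CPG.pop1, List.getLast?_concat, if_pos hw2,
          List.dropLast_concat]
      have hp' : p <+: w.dropLast := by
        rw [List.dropLast_eq_take]
        exact List.prefix_take_iff.mpr ⟨hp, by omega⟩
      exact popTo m u w.dropLast hstep p hp' hpne (by simp; omega)

theorem lcp_ne_nil {c : Letter A} {x y : Word A}
    (hx : x.head? = some c) (hy : y.head? = some c) : lcp x y ≠ [] := by
  cases x with
  | nil => simp at hx
  | cons a x' =>
    cases y with
    | nil => simp at hy
    | cons b y' =>
      simp only [List.head?_cons, Option.some.injEq] at hx hy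
      subst hx; subst hy
      simp [lcp]

theorem GoodSt.isStack {bot : A} : ∀ (N : ℕ) (s : Stack2 A), s.length ≤ N →
    GoodSt bot s → IsStack bot s := by
  intro N
  induction N with
  | zero =>
    intro s hlen hg
    exact absurd (List.length_eq_zero_iff.mp (by omega)) hg.ne
  | succ N ihN =>
    intro s hlen hg
    obtain ⟨w, hw⟩ : ∃ w, s.getLast? = some w := by
      cases e : s.getLast? with
      | none => exact absurd (List.getLast?_eq_none_iff.mp e) hg.ne
      | some w => exact ⟨w, rfl⟩
    have hs := eq_dropLast_concat hw
    have hwmem : w ∈ s := List.mem_of_getElem? (by rw [← List.getLast?_eq_getElem?]; exact hw)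
    have hwcons := hg.head_eq hwmem
    by_cases hu : s.dropLast = []
    · -- single word
      rw [hu] at hs
      simp only [List.nil_append] at hs
      have hbase : IsStack bot ([] ++ [[Sum.inl bot]]) := by
        simpa [bottom2] using IsStack.base (bot := bot)
      have := pushWord w.tail [] [Sum.inl bot] hbase (by simp)
        (fun x hx => hg.syms w hwmem x hx)
        (fun a k hk => by
          apply hg.first a k
          rw [hs]
          simpa using hk)
      rw [hs]
      simpa using hwcons ▸ this
    · -- at least two words
      have hune : s.dropLast ≠ [] := hu
      have hulen : s.dropLast.length = s.length - 1 := by simp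
      have hslen2 : 2 ≤ s.length := by
        have := List.length_pos_iff.mpr hune
        omega
      have hgu : GoodSt bot s.dropLast := by
        rw [List.dropLast_eq_take]
        exact hg.take_part (by omega)
      have hiu : IsStack bot s.dropLast := ihN s.dropLast (by rw [hulen]; omega) hgu
      obtain ⟨wp, hwp⟩ : ∃ wp, s.dropLast.getLast? = some wp := by
        cases e : s.dropLast.getLast? with
        | none => exact absurd (List.getLast?_eq_none_iff.mp e) hune
        | some wp => exact ⟨wp, rfl⟩
      have hwpmem : wp ∈ s.dropLast := List.mem_of_getElem?
        (by rw [← List.getLast?_eq_getElem?]; exact hwp)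
      have hclone : IsStack bot (s.dropLast ++ [wp]) :=
        IsStack.step Op.clone2 hiu (by simp [applyOp, CPG.clone2, top2, hwp])
      set p := lcp wp w with hpdef
      have hpw : p <+: w := lcp_prefix_right wp w
      have hpwp : p <+: wp := lcp_prefix_left wp w
      have hpne : p ≠ [] := lcp_ne_nil (hg.heads wp ((List.dropLast_sublist s).subset hwpmem))
        (hg.heads w hwmem)
      have hpop : IsStack bot (s.dropLast ++ [p]) :=
        popTo wp.length s.dropLast wp hclone p hpwp hpne (by omega)
      -- indices for the last two words of s
      have hdlpos : 1 ≤ s.dropLast.length := by rw [hulen]; omega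
      have hgetdl : ∀ i, i < s.dropLast.length → s[i]? = s.dropLast[i]? := by
        intro i hi
        conv_lhs => rw [hs]
        exact List.getElem?_append_left hi
      have hidx1 : s[s.length - 2]? = some wp := by
        rw [hgetdl (s.length - 2) (by omega),
          show s.length - 2 = s.dropLast.length - 1 by omega,
          ← List.getLast?_eq_getElem?]
        exact hwp
      have hidx2 : s[s.length - 1]? = some w := by
        rw [← List.getLast?_eq_getElem?]; exact hw
      have hfinal : IsStack bot (s.dropLast ++ [p ++ w.drop p.length]) := by
        apply pushWord (w.drop p.length) s.dropLast p hpop hpne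
        · intro x hx
          apply hg.syms w hwmem x
          have hplen := List.length_pos_iff.mpr hpne
          have : w.drop p.length = w.tail.drop (p.length - 1) := by
            rw [List.drop_tail]
            congr 1
            omega
          rw [this] at hx
          exact (List.drop_sublist _ _).subset hx
        · intro a k hk
          obtain ⟨j0, hj0⟩ := mem_getElem? hk
          rw [List.getElem?_drop] at hj0
          have hplen := List.length_pos_iff.mpr hpne
          have hjlt : p.length + j0 < w.length := getElem?_some_lt hj0
          have := hg.links (s.length - 2) wp w hidx1
            (by rw [show s.length - 2 + 1 = s.length - 1 by omega]; exact hidx2)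
            (p.length + j0 - 1) a k
            (by rw [show p.length + j0 - 1 + 1 = p.length + j0 by omega]; exact hj0)
          rcases this with h1 | h1
          · rw [h1, hulen]; omega
          · exfalso
            rw [show p.length + j0 - 1 + 2 = p.length + j0 + 1 by omega] at h1
            have hmwp : p.length + j0 + 1 ≤ wp.length := by
              have hlw := congrArg List.length h1
              simp only [List.length_take] at hlw
              omega
            have := le_lcp_of_take_eq wp w (p.length + j0 + 1) hmwp h1.symm
            rw [← hpdef] at this
            omega
      have hpw' : p ++ w.drop p.length = w := by
        obtain ⟨r, hr⟩ := hpw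
        rw [← hr, List.drop_left]
      rw [hs]
      rwa [hpw'] at hfinal

/-! ### The encoding function, fuel-independent -/

theorem size2_map_tail (x : Stack2 A) (h : ∀ v ∈ x, v ≠ []) :
    size2 (x.map List.tail) + x.length = size2 x := by
  induction x with
  | nil => simp
  | cons v t ih =>
    have hv : v ≠ [] := h v (by simp)
    have hvlen : 1 ≤ v.length := List.length_pos_iff.mpr hv
    have := ih (fun u hu => h u (by simp [hu]))
    simp only [List.map_cons, size2_cons, List.length_cons, List.length_tail]
    omega

theorem length_le_size2 (x : Stack2 A) (h : ∀ v ∈ x, v ≠ []) : x.length ≤ size2 x := by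
  induction x with
  | nil => simp
  | cons v t ih =>
    have hv : 1 ≤ v.length := List.length_pos_iff.mpr (h v (by simp))
    have := ih (fun u hu => h u (by simp [hu]))
    simp only [size2_cons, List.length_cons]
    omega

theorem take2_len {w v : Word A} (hw2 : 2 ≤ w.length) (hv : v.take 2 = w.take 2) :
    2 ≤ v.length := by
  have := congrArg List.length hv
  simp only [List.length_take] at this
  omega

theorem dropWhile_head_false {α : Type} (p : α → Bool) :
    ∀ (l : List α) (x : α) (xs : List α), l.dropWhile p = x :: xs → p x = false := by
  intro l
  induction l with
  | nil => intro x xs h; simp [List.dropWhile] at h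
  | cons c t ih =>
    intro x xs h
    rw [List.dropWhile_cons] at h
    by_cases hc : p c
    · rw [if_pos hc] at h; exact ih x xs h
    · rw [if_neg hc] at h
      simp only [List.cons.injEq] at h
      rw [← h.1]
      simpa using hc

theorem encBL_zero (σ : EncLabel Q A) (l : Stack2 A) : encBL Q 0 σ l = .node σ none none := by
  rw [encBL.eq_def]

theorem encBL_nil (f : ℕ) (σ : EncLabel Q A) : encBL Q (f + 1) σ [] = .node σ none none := by
  rw [encBL.eq_def]

theorem encBL_small_nil (f : ℕ) (σ : EncLabel Q A) (w : Word A) (hw : w.length ≤ 1) :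
    encBL Q (f + 1) σ [w] = .node σ none none := by
  rw [encBL.eq_def]; simp [hw]

theorem encBL_small_cons (f : ℕ) (σ : EncLabel Q A) (w r : Word A) (rest : Stack2 A)
    (hw : w.length ≤ 1) :
    encBL Q (f + 1) σ (w :: r :: rest) = .node σ none (some (encBL Q f epsLab (r :: rest))) := by
  rw [encBL.eq_def]; simp [hw]

theorem encBL_big (f : ℕ) (σ : EncLabel Q A) (w : Word A) (rest : Stack2 A) (τ1 : Letter A)
    (hw : ¬ w.length ≤ 1) (h1 : w[1]? = some τ1) :
    encBL Q (f + 1) σ (w :: rest) =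
      .node σ
        (some (encBL Q f (symLab τ1)
          (((w :: rest).takeWhile (fun v => decide (v.take 2 = w.take 2))).map List.tail)))
        (match (w :: rest).dropWhile (fun v => decide (v.take 2 = w.take 2)) with
          | [] => none
          | _ :: _ => some (encBL Q f epsLab
              ((w :: rest).dropWhile (fun v => decide (v.take 2 = w.take 2))))) := by
  rw [encBL.eq_def]
  simp only [if_neg hw, h1]

theorem encBL_fuel_eq : ∀ (N : ℕ) (l : Stack2 A) (σ : EncLabel Q A) (f f' : ℕ),
    size2 l ≤ N → (∀ w ∈ l, w ≠ []) → size2 l < f → size2 l < f' →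
    encBL Q f σ l = encBL Q f' σ l := by
  intro N
  induction N with
  | zero =>
    intro l σ f f' hN hne hf hf'
    have hl : l = [] := by
      cases l with
      | nil => rfl
      | cons w rest =>
        have := List.length_pos_iff.mpr (hne w (by simp))
        simp only [size2_cons] at hN
        omega
    subst hl
    obtain ⟨f0, rfl⟩ : ∃ f0, f = f0 + 1 := ⟨f - 1, by omega⟩
    obtain ⟨f0', rfl⟩ : ∃ f0', f' = f0' + 1 := ⟨f' - 1, by omega⟩
    rw [encBL_nil, encBL_nil]
  | succ N ih =>
    intro l σ f f' hN hne hf hf'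
    obtain ⟨f0, rfl⟩ : ∃ f0, f = f0 + 1 := ⟨f - 1, by omega⟩
    obtain ⟨f0', rfl⟩ : ∃ f0', f' = f0' + 1 := ⟨f' - 1, by omega⟩
    cases l with
    | nil => rw [encBL_nil, encBL_nil]
    | cons w rest =>
      have hwne : w ≠ [] := hne w (by simp)
      have hwpos : 1 ≤ w.length := List.length_pos_iff.mpr hwne
      by_cases hw : w.length ≤ 1
      · cases rest with
        | nil => rw [encBL_small_nil _ _ _ hw, encBL_small_nil _ _ _ hw]
        | cons r rest' =>
          rw [encBL_small_cons _ _ _ _ _ hw, encBL_small_cons _ _ _ _ _ hw]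
          have hsub := ih (r :: rest') epsLab f0 f0'
            (by simp only [size2_cons] at hN ⊢; omega)
            (fun v hv => hne v (by simp [hv]))
            (by simp only [size2_cons] at hf ⊢; omega)
            (by simp only [size2_cons] at hf' ⊢; omega)
          rw [hsub]
      · have hw2 : 2 ≤ w.length := by omega
        obtain ⟨τ1, hτ1⟩ : ∃ τ1, w[1]? = some τ1 :=
          ⟨w[1]'(by omega), List.getElem?_eq_getElem (by omega)⟩
        rw [encBL_big f0 σ w rest τ1 hw hτ1, encBL_big f0' σ w rest τ1 hw hτ1]
        set P : Word A → Bool := fun v => decide (v.take 2 = w.take 2) with hP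
        have hPw : P w = true := by rw [hP]; simp
        have hsplit : (w :: rest).takeWhile P ++ (w :: rest).dropWhile P = w :: rest :=
          List.takeWhile_append_dropWhile
        have hblkcons : (w :: rest).takeWhile P = w :: rest.takeWhile P := by
          simp [List.takeWhile_cons, hPw]
        have hblk2 : ∀ v ∈ (w :: rest).takeWhile P, 2 ≤ v.length := by
          intro v hv
          have := List.mem_takeWhile_imp hv
          rw [hP] at this
          simp only [decide_eq_true_eq] at this
          exact take2_len hw2 this
        have hblkne' : ∀ v ∈ (w :: rest).takeWhile P, v ≠ [] := by
          intro v hv e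
          have := hblk2 v hv
          rw [e] at this
          simp at this
        have hsz : size2 ((w :: rest).takeWhile P) + size2 ((w :: rest).dropWhile P)
            = size2 (w :: rest) := by
          rw [← size2_append, hsplit]
        have hszmt := size2_map_tail ((w :: rest).takeWhile P) hblkne'
        have hlb := length_le_size2 ((w :: rest).takeWhile P) hblkne'
        have hblkpos : 1 ≤ ((w :: rest).takeWhile P).length := by
          rw [hblkcons]; simp
        have hmt : ∀ v ∈ ((w :: rest).takeWhile P).map List.tail, v ≠ [] := by
          intro v hv
          obtain ⟨u, hu, rfl⟩ := List.mem_map.mp hv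
          have := hblk2 u hu
          intro e
          have : u.tail.length = 0 := by rw [e]; rfl
          simp only [List.length_tail] at this
          omega
        have hL := ih (((w :: rest).takeWhile P).map List.tail) (symLab τ1) f0 f0'
          (by omega) hmt (by omega) (by omega)
        rw [hL]
        cases hd : (w :: rest).dropWhile P with
        | nil => rfl
        | cons x xs =>
          have hxs : size2 (x :: xs) + size2 ((w :: rest).takeWhile P) = size2 (w :: rest) := by
            rw [← hd] at *
            omega
          have hwsz : 2 ≤ size2 ((w :: rest).takeWhile P) := by
            rw [hblkcons]
            simp only [size2_cons]
            omega
          have hR := ih (x :: xs) epsLab f0 f0'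
            (by omega)
            (by intro v hv; rw [← hd] at hv
                exact hne v (List.dropWhile_sublist P |>.subset hv))
            (by omega) (by omega)
          rw [hR]

variable (Q) in
/-- The encoding of a blockline, with fuel removed. -/
def encBL2 (σ : EncLabel Q A) (l : Stack2 A) : PTree (EncLabel Q A) :=
  encBL Q (size2 l + 1) σ l

theorem encBL_eq_encBL2 (σ : EncLabel Q A) (l : Stack2 A) (f : ℕ)
    (hne : ∀ w ∈ l, w ≠ []) (hf : size2 l < f) :
    encBL Q f σ l = encBL2 Q σ l :=
  encBL_fuel_eq (size2 l) l σ f (size2 l + 1) le_rfl hne hf (by omega)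

theorem encBL2_nil (σ : EncLabel Q A) : encBL2 Q σ [] = .node σ none none :=
  encBL_nil 0 σ

theorem encBL2_small_nil (σ : EncLabel Q A) (w : Word A) (hw : w.length ≤ 1) :
    encBL2 Q σ [w] = .node σ none none := by
  unfold encBL2
  obtain ⟨f0, hf0⟩ : ∃ f0, size2 [w] + 1 = f0 + 1 := ⟨size2 [w], rfl⟩
  rw [hf0]
  exact encBL_small_nil f0 σ w hw

theorem encBL2_small_cons (σ : EncLabel Q A) (w r : Word A) (rest : Stack2 A)
    (hw : w.length ≤ 1) (hwne : w ≠ []) (hne : ∀ v ∈ r :: rest, v ≠ []) :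
    encBL2 Q σ (w :: r :: rest) = .node σ none (some (encBL2 Q epsLab (r :: rest))) := by
  unfold encBL2
  rw [show size2 (w :: r :: rest) + 1 = (w.length + size2 (r :: rest)) + 1 by simp]
  rw [encBL_small_cons _ σ w r rest hw]
  congr 1
  have hwpos : 1 ≤ w.length := List.length_pos_iff.mpr hwne
  rw [encBL_eq_encBL2 epsLab (r :: rest) _ hne (by omega)]
  rfl

theorem encBL2_big (σ : EncLabel Q A) (w : Word A) (rest : Stack2 A) (τ1 : Letter A)
    (hw2 : 2 ≤ w.length) (h1 : w[1]? = some τ1) (hne : ∀ v ∈ w :: rest, v ≠ []) :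
    encBL2 Q σ (w :: rest) =
      .node σ
        (some (encBL2 Q (symLab τ1)
          (((w :: rest).takeWhile (fun v => decide (v.take 2 = w.take 2))).map List.tail)))
        (match (w :: rest).dropWhile (fun v => decide (v.take 2 = w.take 2)) with
          | [] => none
          | _ :: _ => some (encBL2 Q epsLab
              ((w :: rest).dropWhile (fun v => decide (v.take 2 = w.take 2))))) := by
  unfold encBL2
  rw [show size2 (w :: rest) + 1 = (w.length + size2 rest) + 1 by simp]
  rw [encBL_big _ σ w rest τ1 (by omega) h1]
  set P : Word A → Bool := fun v => decide (v.take 2 = w.take 2) with hP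
  have hPw : P w = true := by rw [hP]; simp
  have hsplit : (w :: rest).takeWhile P ++ (w :: rest).dropWhile P = w :: rest :=
    List.takeWhile_append_dropWhile
  have hblkcons : (w :: rest).takeWhile P = w :: rest.takeWhile P := by
    simp [List.takeWhile_cons, hPw]
  have hblk2 : ∀ v ∈ (w :: rest).takeWhile P, 2 ≤ v.length := by
    intro v hv
    have := List.mem_takeWhile_imp hv
    rw [hP] at this
    simp only [decide_eq_true_eq] at this
    exact take2_len hw2 this
  have hblkne' : ∀ v ∈ (w :: rest).takeWhile P, v ≠ [] := by
    intro v hv e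
    have := hblk2 v hv
    rw [e] at this
    simp at this
  have hsz : size2 ((w :: rest).takeWhile P) + size2 ((w :: rest).dropWhile P)
      = size2 (w :: rest) := by
    rw [← size2_append, hsplit]
  have hszmt := size2_map_tail ((w :: rest).takeWhile P) hblkne'
  have hlb := length_le_size2 ((w :: rest).takeWhile P) hblkne'
  have hblkpos : 1 ≤ ((w :: rest).takeWhile P).length := by
    rw [hblkcons]; simp
  have hsc : size2 (w :: rest) = w.length + size2 rest := by simp
  have hmt : ∀ v ∈ ((w :: rest).takeWhile P).map List.tail, v ≠ [] := by
    intro v hv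
    obtain ⟨u, hu, rfl⟩ := List.mem_map.mp hv
    have := hblk2 u hu
    intro e
    have : u.tail.length = 0 := by rw [e]; rfl
    simp only [List.length_tail] at this
    omega
  rw [encBL_eq_encBL2 (symLab τ1) _ _ hmt (by omega)]
  cases hd : (w :: rest).dropWhile P with
  | nil => rfl
  | cons x xs =>
    have hxs : size2 (x :: xs) + size2 ((w :: rest).takeWhile P) = size2 (w :: rest) := by
      rw [← hd] at *
      omega
    have hwsz : 2 ≤ size2 ((w :: rest).takeWhile P) := by
      rw [hblkcons]
      simp only [size2_cons]
      omega
    rw [encBL_eq_encBL2 epsLab (x :: xs) _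
      (by intro v hv; rw [← hd] at hv
          exact hne v (List.dropWhile_sublist P |>.subset hv))
      (by omega)]
    rfl

theorem encBL_lab : ∀ (f : ℕ) (σ : EncLabel Q A) (l : Stack2 A), (encBL Q f σ l).lab = σ := by
  intro f σ l
  cases f with
  | zero => rw [encBL_zero]; rfl
  | succ f =>
    cases l with
    | nil => rw [encBL_nil]; rfl
    | cons w rest =>
      by_cases hw : w.length ≤ 1
      · cases rest with
        | nil => rw [encBL_small_nil _ _ _ hw]; rfl
        | cons r rest' => rw [encBL_small_cons _ _ _ _ _ hw]; rfl
      · obtain ⟨τ1, hτ1⟩ : ∃ τ1, w[1]? = some τ1 :=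
          ⟨w[1]'(by omega), List.getElem?_eq_getElem (by omega)⟩
        rw [encBL_big _ _ _ _ τ1 hw hτ1]
        cases hd : (w :: rest).dropWhile (fun v => decide (v.take 2 = w.take 2)) <;> rfl

theorem encBL2_lab (σ : EncLabel Q A) (l : Stack2 A) : (encBL2 Q σ l).lab = σ :=
  encBL_lab _ σ l

/-! ### The hereditary shape predicate for encoding trees -/

def goodLab (bot : A) (x : EncLabel Q A) : Prop :=
  ∃ (σ : A) (lvl : ℕ), σ ≠ bot ∧ (lvl = 1 ∨ lvl = 2) ∧ x = Sum.inr (Sum.inl (σ, lvl))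

inductive Pt (bot : A) : PTree (EncLabel Q A) → Prop where
  | mk : ∀ (a : EncLabel Q A) (lc rc : Option (PTree (EncLabel Q A))),
      (∀ tl, lc = some tl → goodLab bot tl.lab) →
      (∀ tl, lc = some tl → Pt bot tl) →
      (∀ tr, rc = some tr → tr.lab = epsLab) →
      (∀ tr, rc = some tr → Pt bot tr) →
      (∀ tl tr trl, lc = some tl → rc = some tr → tr.lft = some trl →
        ∀ σ : A, ¬(tl.lab = Sum.inr (Sum.inl (σ, 1)) ∧ trl.lab = Sum.inr (Sum.inl (σ, 1)))) →
      Pt bot (.node a lc rc)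

theorem Pt.left' {bot : A} {a : EncLabel Q A} {lc rc} (h : Pt bot (.node a lc rc)) :
    ∀ tl, lc = some tl → goodLab bot tl.lab ∧ Pt bot tl := by
  intro tl e
  cases h with
  | mk a lc rc h1 h2 h3 h4 h5 => exact ⟨h1 tl e, h2 tl e⟩

theorem Pt.right' {bot : A} {a : EncLabel Q A} {lc rc} (h : Pt bot (.node a lc rc)) :
    ∀ tr, rc = some tr → tr.lab = epsLab ∧ Pt bot tr := by
  intro tr e
  cases h with
  | mk a lc rc h1 h2 h3 h4 h5 => exact ⟨h3 tr e, h4 tr e⟩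

theorem Pt.nodup' {bot : A} {a : EncLabel Q A} {lc rc} (h : Pt bot (.node a lc rc)) :
    ∀ tl tr trl, lc = some tl → rc = some tr → tr.lft = some trl →
      ∀ σ : A, ¬(tl.lab = Sum.inr (Sum.inl (σ, 1)) ∧ trl.lab = Sum.inr (Sum.inl (σ, 1))) := by
  cases h with
  | mk a lc rc h1 h2 h3 h4 h5 => exact h5

theorem labelAt_nil_eq {α : Type} (t : PTree α) : t.labelAt [] = some t.lab := by
  cases t; simp [PTree.labelAt]

/-- Address-based conditions imply `Pt`. -/
theorem pt_of_labelAt {bot : A} : ∀ (N : ℕ) (t : PTree (EncLabel Q A)), t.psize ≤ N →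
    (∀ (d : List Bool) (x : EncLabel Q A), t.labelAt (d ++ [false]) = some x → goodLab bot x) →
    (∀ (d : List Bool) (x : EncLabel Q A), t.labelAt (d ++ [true]) = some x → x = epsLab) →
    (∀ (d : List Bool) (σ : A), ¬(t.labelAt (d ++ [false]) = some (Sum.inr (Sum.inl (σ, 1))) ∧
        t.labelAt (d ++ [true, false]) = some (Sum.inr (Sum.inl (σ, 1))))) →
    Pt bot t := by
  intro N
  induction N with
  | zero => intro t ht; cases t with | node a lc rc => simp [PTree.psize_node] at ht
  | succ N ih =>
    intro t ht h5 h6 h7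
    cases t with
    | node a lc rc =>
      constructor
      · intro tl hl
        subst hl
        exact h5 [] tl.lab (by rw [List.nil_append,
          PTree.labelAt_false_some, labelAt_nil_eq])
      · intro tl hl
        subst hl
        apply ih tl (by have := PTree.psize_lt_left a tl rc; omega)
        · intro d x hx
          exact h5 (false :: d) x (by rw [List.cons_append, PTree.labelAt_false_some]; exact hx)
        · intro d x hx
          exact h6 (false :: d) x (by rw [List.cons_append, PTree.labelAt_false_some]; exact hx)
        · intro d σ0
          have := h7 (false :: d) σ0
          rw [List.cons_append, List.cons_append, PTree.labelAt_false_some,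
            PTree.labelAt_false_some] at this
          exact this
      · intro tr hr
        subst hr
        exact h6 [] tr.lab (by rw [List.nil_append,
          PTree.labelAt_true_some, labelAt_nil_eq])
      · intro tr hr
        subst hr
        apply ih tr (by have := PTree.psize_lt_right a lc tr; omega)
        · intro d x hx
          exact h5 (true :: d) x (by rw [List.cons_append, PTree.labelAt_true_some]; exact hx)
        · intro d x hx
          exact h6 (true :: d) x (by rw [List.cons_append, PTree.labelAt_true_some]; exact hx)
        · intro d σ0
          have := h7 (true :: d) σ0
          rw [List.cons_append, List.cons_append, PTree.labelAt_true_some,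
            PTree.labelAt_true_some] at this
          exact this
      · intro tl tr trl hl hr hlft σ0 hcon
        subst hl; subst hr
        apply h7 [] σ0
        constructor
        · rw [List.nil_append, PTree.labelAt_false_some, labelAt_nil_eq, hcon.1]
        · rw [List.nil_append, PTree.labelAt_true_some]
          cases tr with
          | node b lc' rc' =>
            simp only [PTree.lft_node] at hlft
            subst hlft
            rw [show ([false] : List Bool) = false :: [] from rfl, PTree.labelAt_false_some,
              labelAt_nil_eq, hcon.2]

/-- `Pt` implies the address-based conditions. -/
theorem labelAt_left_of_pt {bot : A} : ∀ (N : ℕ) (t : PTree (EncLabel Q A)), t.psize ≤ N →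
    Pt bot t → ∀ (d : List Bool) (x : EncLabel Q A),
      t.labelAt (d ++ [false]) = some x → goodLab bot x := by
  intro N
  induction N with
  | zero => intro t ht; cases t with | node a lc rc => simp [PTree.psize_node] at ht
  | succ N ih =>
    intro t ht hpt d x hx
    cases t with
    | node a lc rc =>
      cases d with
      | nil =>
        cases lc with
        | none => rw [List.nil_append, PTree.labelAt_false_none] at hx; exact nomatch hx
        | some tl =>
          rw [List.nil_append, PTree.labelAt_false_some, labelAt_nil_eq] at hx
          obtain ⟨rfl⟩ : tl.lab = x := by simpa using hx
          exact (hpt.left' tl rfl).1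
      | cons b d' =>
        cases b
        · cases lc with
          | none => rw [List.cons_append, PTree.labelAt_false_none] at hx
                    exact nomatch hx
          | some tl =>
            rw [List.cons_append, PTree.labelAt_false_some] at hx
            exact ih tl (by have := PTree.psize_lt_left a tl rc; omega)
              (hpt.left' tl rfl).2 d' x hx
        · cases rc with
          | none => rw [List.cons_append, PTree.labelAt_true_none] at hx
                    exact nomatch hx
          | some tr =>
            rw [List.cons_append, PTree.labelAt_true_some] at hx
            exact ih tr (by have := PTree.psize_lt_right a lc tr; omega)
              (hpt.right' tr rfl).2 d' x hx

theorem labelAt_right_of_pt {bot : A} : ∀ (N : ℕ) (t : PTree (EncLabel Q A)), t.psize ≤ N →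
    Pt bot t → ∀ (d : List Bool) (x : EncLabel Q A),
      t.labelAt (d ++ [true]) = some x → x = epsLab := by
  intro N
  induction N with
  | zero => intro t ht; cases t with | node a lc rc => simp [PTree.psize_node] at ht
  | succ N ih =>
    intro t ht hpt d x hx
    cases t with
    | node a lc rc =>
      cases d with
      | nil =>
        cases rc with
        | none => rw [List.nil_append, PTree.labelAt_true_none] at hx; exact nomatch hx
        | some tr =>
          rw [List.nil_append, PTree.labelAt_true_some, labelAt_nil_eq] at hx
          obtain ⟨rfl⟩ : tr.lab = x := by simpa using hx
          exact (hpt.right' tr rfl).1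
      | cons b d' =>
        cases b
        · cases lc with
          | none => rw [List.cons_append, PTree.labelAt_false_none] at hx
                    exact nomatch hx
          | some tl =>
            rw [List.cons_append, PTree.labelAt_false_some] at hx
            exact ih tl (by have := PTree.psize_lt_left a tl rc; omega)
              (hpt.left' tl rfl).2 d' x hx
        · cases rc with
          | none => rw [List.cons_append, PTree.labelAt_true_none] at hx
                    exact nomatch hx
          | some tr =>
            rw [List.cons_append, PTree.labelAt_true_some] at hx
            exact ih tr (by have := PTree.psize_lt_right a lc tr; omega)
              (hpt.right' tr rfl).2 d' x hx

theorem labelAt_nodup_of_pt {bot : A} : ∀ (N : ℕ) (t : PTree (EncLabel Q A)), t.psize ≤ N →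
    Pt bot t → ∀ (d : List Bool) (σ : A),
      ¬(t.labelAt (d ++ [false]) = some (Sum.inr (Sum.inl (σ, 1))) ∧
        t.labelAt (d ++ [true, false]) = some (Sum.inr (Sum.inl (σ, 1)))) := by
  intro N
  induction N with
  | zero => intro t ht; cases t with | node a lc rc => simp [PTree.psize_node] at ht
  | succ N ih =>
    intro t ht hpt d σ0 hcon
    obtain ⟨h1, h2⟩ := hcon
    cases t with
    | node a lc rc =>
      cases d with
      | nil =>
        cases lc with
        | none => rw [List.nil_append, PTree.labelAt_false_none] at h1
                  exact nomatch h1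
        | some tl =>
          cases rc with
          | none => rw [List.nil_append, PTree.labelAt_true_none] at h2
                    exact nomatch h2
          | some tr =>
            rw [List.nil_append, PTree.labelAt_false_some, labelAt_nil_eq] at h1
            rw [List.nil_append, PTree.labelAt_true_some] at h2
            cases tr with
            | node b lc' rc' =>
              cases lc' with
              | none =>
                rw [show ([false] : List Bool) = false :: ([] : List Bool) from rfl,
                  PTree.labelAt_false_none] at h2
                exact nomatch h2
              | some trl =>
                rw [show ([false] : List Bool) = false :: ([] : List Bool) from rfl,
                  PTree.labelAt_false_some, labelAt_nil_eq] at h2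
                exact hpt.nodup' tl (.node b (some trl) rc') trl rfl rfl rfl σ0
                  ⟨by simpa using h1, by simpa using h2⟩
      | cons b d' =>
        cases b
        · cases lc with
          | none => rw [List.cons_append, PTree.labelAt_false_none] at h1
                    exact nomatch h1
          | some tl =>
            rw [List.cons_append, PTree.labelAt_false_some] at h1
            rw [List.cons_append, PTree.labelAt_false_some] at h2
            exact ih tl (by have := PTree.psize_lt_left a tl rc; omega)
              (hpt.left' tl rfl).2 d' σ0 ⟨h1, h2⟩
        · cases rc with
          | none => rw [List.cons_append, PTree.labelAt_true_none] at h1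
                    exact nomatch h1
          | some tr =>
            rw [List.cons_append, PTree.labelAt_true_some] at h1
            rw [List.cons_append, PTree.labelAt_true_some] at h2
            exact ih tr (by have := PTree.psize_lt_right a lc tr; omega)
              (hpt.right' tr rfl).2 d' σ0 ⟨h1, h2⟩

/-! ### The encoding of a good blockline is a good tree -/

theorem encBL2_lft {σx : EncLabel Q A} {x : Word A} {xs : Stack2 A} {trl : PTree (EncLabel Q A)}
    (hne : ∀ v ∈ x :: xs, v ≠ []) (h : (encBL2 Q σx (x :: xs)).lft = some trl) :
    ∃ x1, x[1]? = some x1 ∧ trl.lab = symLab x1 ∧ 2 ≤ x.length := by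
  by_cases hx : x.length ≤ 1
  · exfalso
    cases xs with
    | nil => rw [encBL2_small_nil _ _ hx] at h; simp at h
    | cons r rest =>
      rw [encBL2_small_cons _ _ _ _ hx (hne x (by simp)) (fun v hv => hne v (by simp [hv]))] at h
      simp at h
  · have hx2 : 2 ≤ x.length := by omega
    obtain ⟨x1, hx1⟩ : ∃ x1, x[1]? = some x1 :=
      ⟨x[1]'(by omega), List.getElem?_eq_getElem (by omega)⟩
    rw [encBL2_big _ _ _ x1 hx2 hx1 hne] at h
    simp only [PTree.lft_node, Option.some.injEq] at h
    exact ⟨x1, hx1, by rw [← h, encBL2_lab], hx2⟩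

theorem symLab_lvl1 {τ1 : Letter A} {σ0 : A}
    (h : symLab (Q := Q) τ1 = Sum.inr (Sum.inl (σ0, 1))) : τ1 = Sum.inl σ0 := by
  cases τ1 with
  | inl a => simp only [symLab, symOf, lvlOf] at h
             simp only [Sum.inr.injEq, Sum.inl.injEq, Prod.mk.injEq] at h
             rw [h.1]
  | inr p => obtain ⟨a, k⟩ := p
             simp only [symLab, symOf, lvlOf] at h
             simp at h

theorem pt_encBL2 {bot : A} : ∀ (N : ℕ) (l : Stack2 A), size2 l ≤ N →
    ∀ (τ : Letter A) (n : ℕ), GoodBL bot τ n l → ∀ σ : EncLabel Q A,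
      Pt bot (encBL2 Q σ l) := by
  intro N
  induction N with
  | zero =>
    intro l hN τ n hg σ
    exfalso
    cases l with
    | nil => exact hg.ne rfl
    | cons w rest =>
      have := List.length_pos_iff.mpr (hg.word_ne (w := w) (by simp))
      simp only [size2_cons] at hN
      omega
  | succ N ih =>
    intro l hN τ n hg σ
    cases l with
    | nil => exact absurd rfl hg.ne
    | cons w rest =>
      have hne : ∀ v ∈ w :: rest, v ≠ [] := fun v hv => hg.word_ne hv
      have hwcons := hg.head_eq (w := w) (by simp)
      by_cases hlen : w.length ≤ 1
      · have hwτ : w = [τ] := by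
          have : w.tail.length = 0 := by
            have := congrArg List.length hwcons
            simp only [List.length_cons] at this
            omega
          rw [hwcons, List.length_eq_zero_iff.mp this]
        cases rest with
        | nil =>
          rw [encBL2_small_nil _ _ hlen]
          exact Pt.mk σ none none (by simp) (by simp) (by simp) (by simp) (by simp)
        | cons r rest' =>
          have hgd : GoodBL bot τ (n + 1) (r :: rest') := by
            have := hg.drop_part [w] (r :: rest') rfl (by simp) (by simp) ?_
            · simpa using this
            · intro h2 hcontra
              have hgl : ([w] : Stack2 A).getLastD [] = w := rfl
              rw [hgl, hwτ] at hcontra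
              have h1 := congrArg List.length hcontra
              simp only [List.headD_cons, List.length_take] at h1
              simp only [List.headD_cons] at h2
              simp at h1
              omega
          rw [encBL2_small_cons _ _ _ _ hlen (hne w (by simp)) (fun v hv => hne v (by simp [hv]))]
          refine Pt.mk σ none _ (by simp) (by simp) ?_ ?_ (by simp)
          · intro tr e
            simp only [Option.some.injEq] at e
            rw [← e, encBL2_lab]
          · intro tr e
            simp only [Option.some.injEq] at e
            rw [← e]
            exact ih (r :: rest') (by simp only [size2_cons] at hN ⊢
                                      have : 1 ≤ w.length := List.length_pos_iff.mpr (hne w (by simp))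
                                      omega) τ (n + 1) hgd epsLab
      · have hw2 : 2 ≤ w.length := by omega
        obtain ⟨τ1, hτ1⟩ : ∃ τ1, w[1]? = some τ1 :=
          ⟨w[1]'(by omega), List.getElem?_eq_getElem (by omega)⟩
        have hτ1mem : τ1 ∈ w.tail := by
          have h0 : w.tail[0]? = some τ1 := by rw [List.getElem?_tail]; exact hτ1
          exact List.mem_of_getElem? h0
        have hτ1sym : symOf τ1 ≠ bot := hg.syms w (by simp) τ1 hτ1mem
        -- block facts
        have hPw : (fun v => decide (v.take 2 = w.take 2)) w = true := by simp
        have hsplit : (w :: rest).takeWhile (fun v => decide (v.take 2 = w.take 2)) ++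
            (w :: rest).dropWhile (fun v => decide (v.take 2 = w.take 2)) = w :: rest :=
          List.takeWhile_append_dropWhile
        have hblkcons : (w :: rest).takeWhile (fun v => decide (v.take 2 = w.take 2)) =
            w :: rest.takeWhile (fun v => decide (v.take 2 = w.take 2)) := by
          simp [List.takeWhile_cons]
        have hblk2 : ∀ v ∈ (w :: rest).takeWhile (fun v => decide (v.take 2 = w.take 2)),
            2 ≤ v.length := by
          intro v hv
          have := List.mem_takeWhile_imp hv
          simp only [decide_eq_true_eq] at this
          exact take2_len hw2 this
        have hblktake : ∀ v ∈ (w :: rest).takeWhile (fun v => decide (v.take 2 = w.take 2)),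
            v.take 2 = w.take 2 := by
          intro v hv
          have := List.mem_takeWhile_imp hv
          simpa using this
        have hblkne' : ∀ v ∈ (w :: rest).takeWhile (fun v => decide (v.take 2 = w.take 2)),
            v ≠ [] := by
          intro v hv e
          have := hblk2 v hv
          rw [e] at this
          simp at this
        have hblkne : (w :: rest).takeWhile (fun v => decide (v.take 2 = w.take 2)) ≠ [] := by
          rw [hblkcons]; simp
        have hsz : size2 ((w :: rest).takeWhile (fun v => decide (v.take 2 = w.take 2))) +
            size2 ((w :: rest).dropWhile (fun v => decide (v.take 2 = w.take 2)))
            = size2 (w :: rest) := by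
          rw [← size2_append, hsplit]
        have hszmt := size2_map_tail _ hblkne'
        have hlb := length_le_size2 _ hblkne'
        have hblkpos : 1 ≤ ((w :: rest).takeWhile (fun v => decide (v.take 2 = w.take 2))).length := by
          rw [hblkcons]; simp
        have hwsz : 2 ≤ size2 ((w :: rest).takeWhile (fun v => decide (v.take 2 = w.take 2))) := by
          rw [hblkcons]
          simp only [size2_cons]
          omega
        have hgblk := hg.block_part rfl hτ1
        have hsc : size2 (w :: rest) = w.length + size2 rest := by simp
        rw [encBL2_big σ w rest τ1 hw2 hτ1 hne]
        cases hd : (w :: rest).dropWhile (fun v => decide (v.take 2 = w.take 2)) with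
        | nil =>
          refine Pt.mk σ _ none ?_ ?_ (by simp) (by simp) (by simp)
          · intro tl e
            simp only [Option.some.injEq] at e
            rw [← e, encBL2_lab]
            exact ⟨symOf τ1, lvlOf τ1, hτ1sym, by cases τ1 <;> simp [lvlOf], rfl⟩
          · intro tl e
            simp only [Option.some.injEq] at e
            rw [← e]
            exact ih _ (by omega) τ1 n hgblk _
        | cons x xs =>
          have hxmem : x ∈ w :: rest := by
            have : x ∈ x :: xs := by simp
            rw [← hd] at this
            exact (List.dropWhile_sublist _).subset this
          have hxne : ∀ v ∈ x :: xs, v ≠ [] := by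
            intro v hv
            rw [← hd] at hv
            exact hne v ((List.dropWhile_sublist _).subset hv)
          have hPx : decide (x.take 2 = w.take 2) = false :=
            dropWhile_head_false _ (w :: rest) x xs hd
          have hgdrop : GoodBL bot τ
              (n + ((w :: rest).takeWhile (fun v => decide (v.take 2 = w.take 2))).length)
              (x :: xs) := by
            apply hg.drop_part _ (x :: xs) (by rw [← hd, hsplit]) hblkne (by simp)
            intro h2 hcontra
            simp only [List.headD_cons] at hcontra
            have hlastmem : ((w :: rest).takeWhile
                (fun v => decide (v.take 2 = w.take 2))).getLastD [] ∈
                (w :: rest).takeWhile (fun v => decide (v.take 2 = w.take 2)) :=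
              List.mem_of_getElem? (by rw [← List.getLast?_eq_getElem?]
                                       exact getLast?_eq_getLastD _ [] hblkne)
            have := hblktake _ hlastmem
            rw [this] at hcontra
            rw [hcontra] at hPx
            simp at hPx
          have hxsz : size2 (x :: xs) +
              size2 ((w :: rest).takeWhile (fun v => decide (v.take 2 = w.take 2))) =
              size2 (w :: rest) := by
            rw [← hd] at *
            omega
          refine Pt.mk σ _ _ ?_ ?_ ?_ ?_ ?_
          · intro tl e
            simp only [Option.some.injEq] at e
            rw [← e, encBL2_lab]
            exact ⟨symOf τ1, lvlOf τ1, hτ1sym, by cases τ1 <;> simp [lvlOf], rfl⟩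
          · intro tl e
            simp only [Option.some.injEq] at e
            rw [← e]
            exact ih _ (by omega) τ1 n hgblk _
          · intro tr e
            simp only [Option.some.injEq] at e
            rw [← e, encBL2_lab]
          · intro tr e
            simp only [Option.some.injEq] at e
            rw [← e]
            exact ih (x :: xs) (by omega) τ _ hgdrop _
          · intro tl tr trl e1 e2 elft σ0 hcon
            simp only [Option.some.injEq] at e1 e2
            have hlab1 : tl.lab = symLab τ1 := by rw [← e1, encBL2_lab]
            have hτ1l : τ1 = Sum.inl σ0 := symLab_lvl1 (by rw [← hlab1]; exact hcon.1)
            rw [← e2] at elft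
            obtain ⟨x1, hx1, hx1lab, hx2⟩ := encBL2_lft hxne elft
            have hx1l : x1 = Sum.inl σ0 := symLab_lvl1 (by rw [← hx1lab]; exact hcon.2)
            have hxhead : x.head? = some τ := hg.heads x hxmem
            have hxtake : x.take 2 = [τ, Sum.inl σ0] := take2_of_head hxhead (by rw [← hx1l]; exact hx1)
            have hwtake : w.take 2 = [τ, Sum.inl σ0] :=
              take2_of_head (hg.heads w (by simp)) (by rw [← hτ1l]; exact hτ1)
            rw [hxtake, hwtake] at hPx
            simp at hPx

/-! ### Injectivity of the encoding -/

theorem block_facts (w : Word A) (rest : Stack2 A) (hw2 : 2 ≤ w.length)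
    (hne : ∀ v ∈ w :: rest, v ≠ []) :
    size2 (((w :: rest).takeWhile (fun v => decide (v.take 2 = w.take 2))).map List.tail) + 1
        ≤ size2 (w :: rest) ∧
    size2 ((w :: rest).dropWhile (fun v => decide (v.take 2 = w.take 2))) + 2
        ≤ size2 (w :: rest) := by
  have hsplit : (w :: rest).takeWhile (fun v => decide (v.take 2 = w.take 2)) ++
      (w :: rest).dropWhile (fun v => decide (v.take 2 = w.take 2)) = w :: rest :=
    List.takeWhile_append_dropWhile
  have hblkcons : (w :: rest).takeWhile (fun v => decide (v.take 2 = w.take 2)) =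
      w :: rest.takeWhile (fun v => decide (v.take 2 = w.take 2)) := by
    simp [List.takeWhile_cons]
  have hblk2 : ∀ v ∈ (w :: rest).takeWhile (fun v => decide (v.take 2 = w.take 2)),
      2 ≤ v.length := by
    intro v hv
    have := List.mem_takeWhile_imp hv
    simp only [decide_eq_true_eq] at this
    exact take2_len hw2 this
  have hblkne' : ∀ v ∈ (w :: rest).takeWhile (fun v => decide (v.take 2 = w.take 2)),
      v ≠ [] := by
    intro v hv e
    have := hblk2 v hv
    rw [e] at this
    simp at this
  have hsz : size2 ((w :: rest).takeWhile (fun v => decide (v.take 2 = w.take 2))) +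
      size2 ((w :: rest).dropWhile (fun v => decide (v.take 2 = w.take 2)))
      = size2 (w :: rest) := by
    rw [← size2_append, hsplit]
  have hszmt := size2_map_tail _ hblkne'
  have hlb := length_le_size2 _ hblkne'
  have hblkpos : 1 ≤ ((w :: rest).takeWhile (fun v => decide (v.take 2 = w.take 2))).length := by
    rw [hblkcons]; simp
  have hwsz : 2 ≤ size2 ((w :: rest).takeWhile (fun v => decide (v.take 2 = w.take 2))) := by
    rw [hblkcons]
    simp only [size2_cons]
    omega
  omega

theorem map_cons_tail {c : Letter A} : ∀ (x : Stack2 A), (∀ v ∈ x, v.head? = some c) →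
    (x.map List.tail).map (fun v => c :: v) = x
  | [], _ => rfl
  | v :: t, h => by
    have hv := h v (by simp)
    cases v with
    | nil => simp at hv
    | cons a v' =>
      simp only [List.head?_cons, Option.some.injEq] at hv
      subst hv
      simp only [List.map_cons, List.tail_cons, List.cons.injEq, true_and]
      exact map_cons_tail t (fun u hu => h u (by simp [hu]))

theorem encBL2_inj {bot : A} : ∀ (N : ℕ) (l l' : Stack2 A), size2 l ≤ N →
    ∀ (τ : Letter A) (n : ℕ), GoodBL bot τ n l → GoodBL bot τ n l' →
    ∀ σ : EncLabel Q A, encBL2 Q σ l = encBL2 Q σ l' → l = l' := by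
  intro N
  induction N with
  | zero =>
    intro l l' hN τ n hg hg' σ heq
    exfalso
    cases l with
    | nil => exact hg.ne rfl
    | cons w rest =>
      have := List.length_pos_iff.mpr (hg.word_ne (w := w) (by simp))
      simp only [size2_cons] at hN
      omega
  | succ N ih =>
    intro l l' hN τ n hg hg' σ heq
    cases l with
    | nil => exact absurd rfl hg.ne
    | cons w rest =>
    cases l' with
    | nil => exact absurd rfl hg'.ne
    | cons w' rest' =>
      have hne : ∀ v ∈ w :: rest, v ≠ [] := fun v hv => hg.word_ne hv
      have hne' : ∀ v ∈ w' :: rest', v ≠ [] := fun v hv => hg'.word_ne hv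
      have hwcons := hg.head_eq (w := w) (by simp)
      have hwcons' := hg'.head_eq (w := w') (by simp)
      have hwpos : 1 ≤ w.length := List.length_pos_iff.mpr (hne w (by simp))
      have hwpos' : 1 ≤ w'.length := List.length_pos_iff.mpr (hne' w' (by simp))
      by_cases hlen : w.length ≤ 1 <;> by_cases hlen' : w'.length ≤ 1
      · -- both small
        have hwτ : w = [τ] := by
          have : w.tail.length = 0 := by
            have := congrArg List.length hwcons
            simp only [List.length_cons] at this
            omega
          rw [hwcons, List.length_eq_zero_iff.mp this]
        have hwτ' : w' = [τ] := by
          have : w'.tail.length = 0 := by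
            have := congrArg List.length hwcons'
            simp only [List.length_cons] at this
            omega
          rw [hwcons', List.length_eq_zero_iff.mp this]
        subst hwτ; subst hwτ'
        cases rest with
        | nil =>
          cases rest' with
          | nil => rfl
          | cons r' rs' =>
            rw [encBL2_small_nil _ _ hlen,
              encBL2_small_cons _ _ _ _ hlen' (hne' _ (by simp))
                (fun v hv => hne' v (by simp [hv]))] at heq
            simp at heq
        | cons r rs =>
          cases rest' with
          | nil =>
            rw [encBL2_small_nil _ _ hlen',
              encBL2_small_cons _ _ _ _ hlen (hne _ (by simp))
                (fun v hv => hne v (by simp [hv]))] at heq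
            simp at heq
          | cons r' rs' =>
            rw [encBL2_small_cons _ _ _ _ hlen (hne _ (by simp))
                (fun v hv => hne v (by simp [hv])),
              encBL2_small_cons _ _ _ _ hlen' (hne' _ (by simp))
                (fun v hv => hne' v (by simp [hv]))] at heq
            simp only [PTree.node.injEq, Option.some.injEq, true_and] at heq
            have hgd : GoodBL bot τ (n + 1) (r :: rs) := by
              have := hg.drop_part [[τ]] (r :: rs) rfl (by simp) (by simp) ?_
              · simpa using this
              · intro h2 hcontra
                have hgl : ([[τ]] : Stack2 A).getLastD [] = [τ] := rfl
                rw [hgl] at hcontra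
                have h1 := congrArg List.length hcontra
                simp only [List.headD_cons, List.length_take] at h1
                simp only [List.headD_cons] at h2
                simp at h1
                omega
            have hgd' : GoodBL bot τ (n + 1) (r' :: rs') := by
              have := hg'.drop_part [[τ]] (r' :: rs') rfl (by simp) (by simp) ?_
              · simpa using this
              · intro h2 hcontra
                have hgl : ([[τ]] : Stack2 A).getLastD [] = [τ] := rfl
                rw [hgl] at hcontra
                have h1 := congrArg List.length hcontra
                simp only [List.headD_cons, List.length_take] at h1
                simp only [List.headD_cons] at h2
                simp at h1
                omega
            have := ih (r :: rs) (r' :: rs')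
              (by simp only [size2_cons] at hN ⊢; omega) τ (n + 1) hgd hgd' epsLab heq
            rw [this]
      · -- small vs big
        exfalso
        have hwτ : w = [τ] := by
          have : w.tail.length = 0 := by
            have := congrArg List.length hwcons
            simp only [List.length_cons] at this
            omega
          rw [hwcons, List.length_eq_zero_iff.mp this]
        obtain ⟨τ1', hτ1'⟩ : ∃ τ1', w'[1]? = some τ1' :=
          ⟨w'[1]'(by omega), List.getElem?_eq_getElem (by omega)⟩
        rw [encBL2_big σ w' rest' τ1' (by omega) hτ1' hne'] at heq
        cases rest with
        | nil =>
          rw [encBL2_small_nil _ _ hlen] at heq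
          simp at heq
        | cons r rs =>
          rw [encBL2_small_cons _ _ _ _ hlen (hne _ (by simp))
            (fun v hv => hne v (by simp [hv]))] at heq
          simp at heq
      · -- big vs small
        exfalso
        obtain ⟨τ1, hτ1⟩ : ∃ τ1, w[1]? = some τ1 :=
          ⟨w[1]'(by omega), List.getElem?_eq_getElem (by omega)⟩
        rw [encBL2_big σ w rest τ1 (by omega) hτ1 hne] at heq
        cases rest' with
        | nil =>
          rw [encBL2_small_nil _ _ hlen'] at heq
          simp at heq
        | cons r' rs' =>
          rw [encBL2_small_cons _ _ _ _ hlen' (hne' _ (by simp))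
            (fun v hv => hne' v (by simp [hv]))] at heq
          simp at heq
      · -- both big
        have hw2 : 2 ≤ w.length := by omega
        have hw2' : 2 ≤ w'.length := by omega
        obtain ⟨τ1, hτ1⟩ : ∃ τ1, w[1]? = some τ1 :=
          ⟨w[1]'(by omega), List.getElem?_eq_getElem (by omega)⟩
        obtain ⟨τ1', hτ1'⟩ : ∃ τ1', w'[1]? = some τ1' :=
          ⟨w'[1]'(by omega), List.getElem?_eq_getElem (by omega)⟩
        have hτ1mem : τ1 ∈ w.tail := by
          have h0 : w.tail[0]? = some τ1 := by rw [List.getElem?_tail]; exact hτ1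
          exact List.mem_of_getElem? h0
        have hτ1mem' : τ1' ∈ w'.tail := by
          have h0 : w'.tail[0]? = some τ1' := by rw [List.getElem?_tail]; exact hτ1'
          exact List.mem_of_getElem? h0
        rw [encBL2_big σ w rest τ1 hw2 hτ1 hne,
          encBL2_big σ w' rest' τ1' hw2' hτ1' hne'] at heq
        -- labels of the left children agree
        have hlabeq : symLab (Q := Q) τ1 = symLab τ1' := by
          have h0 : (PTree.node σ _ _).lft = (PTree.node σ _ _).lft := congrArg PTree.lft heq
          simp only [PTree.lft_node, Option.some.injEq] at h0
          have := congrArg PTree.lab h0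
          rwa [encBL2_lab, encBL2_lab] at this
        have hττ : τ1 = τ1' := by
          cases τ1 with
          | inl a =>
            cases τ1' with
            | inl a' =>
              simp only [symLab, symOf, lvlOf, Sum.inr.injEq, Sum.inl.injEq,
                Prod.mk.injEq] at hlabeq
              rw [hlabeq.1]
            | inr p' => simp [symLab, symOf, lvlOf] at hlabeq
          | inr p =>
            obtain ⟨a, k⟩ := p
            cases τ1' with
            | inl a' => simp [symLab, symOf, lvlOf] at hlabeq
            | inr p' =>
              obtain ⟨a', k'⟩ := p'
              simp only [symLab, symOf, lvlOf, Sum.inr.injEq, Sum.inl.injEq,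
                Prod.mk.injEq] at hlabeq
              have hk : k = n := hg.first a k (by
                rw [hwcons] at hτ1
                have : w.tail[0]? = some (Sum.inr (a, k)) := by
                  rw [List.getElem?_tail]; rw [hwcons]; exact hτ1
                exact List.mem_of_getElem? this)
              have hk' : k' = n := hg'.first a' k' (by
                have : w'.tail[0]? = some (Sum.inr (a', k')) := by
                  rw [List.getElem?_tail]; exact hτ1'
                exact List.mem_of_getElem? this)
              rw [hlabeq.1, hk, hk']
        subst hττ
        have htake2 : w.take 2 = [τ, τ1] := take2_of_head (hg.heads w (by simp)) hτ1
        have htake2' : w'.take 2 = [τ, τ1] := take2_of_head (hg'.heads w' (by simp)) hτ1'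
        have hPP : (fun v : Word A => decide (v.take 2 = w'.take 2)) =
            (fun v : Word A => decide (v.take 2 = w.take 2)) := by
          funext v
          rw [htake2, htake2']
        rw [hPP] at heq
        -- left parts
        have hbf := block_facts w rest hw2 hne
        have hbf' := block_facts w' rest' hw2' hne'
        rw [hPP] at hbf'
        have hgblk := hg.block_part rfl hτ1
        have hgblk' := hg'.block_part rfl hτ1'
        have hlfteq : encBL2 Q (symLab τ1)
            (((w :: rest).takeWhile (fun v => decide (v.take 2 = w.take 2))).map List.tail) =
            encBL2 Q (symLab τ1)
            (((w' :: rest').takeWhile (fun v => decide (v.take 2 = w.take 2))).map List.tail) := by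
          have h0 := congrArg PTree.lft heq
          simp only [PTree.lft_node, Option.some.injEq] at h0
          exact h0
        have hblkT : ((w :: rest).takeWhile (fun v => decide (v.take 2 = w.take 2))).map List.tail =
            ((w' :: rest').takeWhile (fun v => decide (v.take 2 = w.take 2))).map List.tail := by
          apply ih _ _ (by have := hbf.1; omega) τ1 n hgblk ?_ _ hlfteq
          have := hgblk'
          rwa [hPP] at this
        -- recover the blocks
        have hheads : ∀ v ∈ (w :: rest).takeWhile (fun v => decide (v.take 2 = w.take 2)),
            v.head? = some τ :=
          fun v hv => hg.heads v ((List.takeWhile_prefix _).subset hv)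
        have hheads' : ∀ v ∈ (w' :: rest').takeWhile (fun v => decide (v.take 2 = w.take 2)),
            v.head? = some τ :=
          fun v hv => hg'.heads v ((List.takeWhile_prefix _).subset hv)
        have hblkeq : (w :: rest).takeWhile (fun v => decide (v.take 2 = w.take 2)) =
            (w' :: rest').takeWhile (fun v => decide (v.take 2 = w.take 2)) := by
          rw [← map_cons_tail _ hheads, ← map_cons_tail _ hheads', hblkT]
        -- right parts
        have hsplit : (w :: rest).takeWhile (fun v => decide (v.take 2 = w.take 2)) ++
            (w :: rest).dropWhile (fun v => decide (v.take 2 = w.take 2)) = w :: rest :=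
          List.takeWhile_append_dropWhile
        have hsplit' : (w' :: rest').takeWhile (fun v => decide (v.take 2 = w.take 2)) ++
            (w' :: rest').dropWhile (fun v => decide (v.take 2 = w.take 2)) = w' :: rest' :=
          List.takeWhile_append_dropWhile
        have hblkne : (w :: rest).takeWhile (fun v => decide (v.take 2 = w.take 2)) ≠ [] := by
          have : (fun v => decide (v.take 2 = w.take 2)) w = true := by simp
          simp [List.takeWhile_cons, this]
        cases hd : (w :: rest).dropWhile (fun v => decide (v.take 2 = w.take 2)) with
        | nil =>
          cases hd' : (w' :: rest').dropWhile (fun v => decide (v.take 2 = w.take 2)) with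
          | nil =>
            rw [hd] at hsplit
            rw [hd'] at hsplit'
            rw [← hsplit, ← hsplit', hblkeq]
          | cons x' xs' =>
            exfalso
            rw [hd, hd'] at heq
            simp at heq
        | cons x xs =>
          cases hd' : (w' :: rest').dropWhile (fun v => decide (v.take 2 = w.take 2)) with
          | nil =>
            exfalso
            rw [hd, hd'] at heq
            simp at heq
          | cons x' xs' =>
            rw [hd, hd'] at heq
            simp only [PTree.node.injEq, Option.some.injEq, true_and] at heq
            -- boundary facts
            have hPx : decide (x.take 2 = w.take 2) = false :=
              dropWhile_head_false _ (w :: rest) x xs hd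
            have hPx' : decide (x'.take 2 = w.take 2) = false :=
              dropWhile_head_false _ (w' :: rest') x' xs' hd'
            have hlastmem : ((w :: rest).takeWhile
                (fun v => decide (v.take 2 = w.take 2))).getLastD [] ∈
                (w :: rest).takeWhile (fun v => decide (v.take 2 = w.take 2)) :=
              List.mem_of_getElem? (by rw [← List.getLast?_eq_getElem?]
                                       exact getLast?_eq_getLastD _ [] hblkne)
            have hlasttake : (((w :: rest).takeWhile
                (fun v => decide (v.take 2 = w.take 2))).getLastD []).take 2 = w.take 2 := by
              have := List.mem_takeWhile_imp hlastmem
              simpa using this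
            have hgdrop : GoodBL bot τ
                (n + ((w :: rest).takeWhile (fun v => decide (v.take 2 = w.take 2))).length)
                (x :: xs) := by
              apply hg.drop_part ((w :: rest).takeWhile (fun v => decide (v.take 2 = w.take 2)))
                (x :: xs) (by rw [← hd, hsplit]) hblkne (by simp)
              intro h2 hcontra
              simp only [List.headD_cons] at hcontra
              rw [hlasttake] at hcontra
              rw [hcontra] at hPx
              simp at hPx
            have hgdrop' : GoodBL bot τ
                (n + ((w :: rest).takeWhile (fun v => decide (v.take 2 = w.take 2))).length)
                (x' :: xs') := by
              apply hg'.drop_part ((w :: rest).takeWhile (fun v => decide (v.take 2 = w.take 2)))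
                (x' :: xs') (by rw [hblkeq, ← hd', hsplit']) hblkne (by simp)
              intro h2 hcontra
              simp only [List.headD_cons] at hcontra
              rw [hlasttake] at hcontra
              rw [hcontra] at hPx'
              simp at hPx'
            have hrec := ih (x :: xs) (x' :: xs')
              (by have := hbf.2
                  rw [hd] at this
                  omega) τ _ hgdrop hgdrop' epsLab heq.2
            rw [← hsplit, ← hsplit', hblkeq, hd, hd', hrec]

/-! ### Surjectivity of the encoding -/

theorem getElem?_cons_one {α : Type} (a : α) (l : List α) : (a :: l)[1]? = l[0]? := by
  rw [show (1 : ℕ) = 0 + 1 from rfl, List.getElem?_cons_succ]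

def mkLetter (bot : A) (x : EncLabel Q A) (n : ℕ) : Letter A :=
  match x with
  | Sum.inr (Sum.inl (a, lvl)) => if lvl = 1 then Sum.inl a else Sum.inr (a, n)
  | _ => Sum.inl bot

theorem mkLetter_symLab {bot : A} {x : EncLabel Q A} (h : goodLab bot x) (n : ℕ) :
    symLab (mkLetter bot x n) = x := by
  obtain ⟨σ0, lvl, hσ, hlvl, rfl⟩ := h
  rcases hlvl with rfl | rfl
  · simp [mkLetter, symLab, symOf, lvlOf]
  · simp [mkLetter, symLab, symOf, lvlOf]

theorem mkLetter_sym {bot : A} {x : EncLabel Q A} (h : goodLab bot x) (n : ℕ) :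
    symOf (mkLetter bot x n) ≠ bot := by
  obtain ⟨σ0, lvl, hσ, hlvl, rfl⟩ := h
  rcases hlvl with rfl | rfl
  · simpa [mkLetter, symOf] using hσ
  · simpa [mkLetter, symOf] using hσ

theorem mkLetter_link {bot : A} {x : EncLabel Q A} {n : ℕ} {a : A} {k : ℕ}
    (h : mkLetter bot x n = Sum.inr (a, k)) : k = n := by
  unfold mkLetter at h
  split at h
  · split at h
    · exact nomatch h
    · simp only [Sum.inr.injEq, Prod.mk.injEq] at h
      exact h.2.symm
  · exact nomatch h

theorem mkLetter_ne {bot : A} {x x' : EncLabel Q A} {n n' : ℕ} (hx : goodLab bot x)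
    (hx' : goodLab bot x') (hnn : n ≠ n')
    (hdiff : ∀ σ0 : A, ¬(x = Sum.inr (Sum.inl (σ0, 1)) ∧ x' = Sum.inr (Sum.inl (σ0, 1)))) :
    mkLetter bot x n ≠ mkLetter bot x' n' := by
  obtain ⟨σ0, lvl, hσ, hlvl, rfl⟩ := hx
  obtain ⟨σ0', lvl', hσ', hlvl', rfl⟩ := hx'
  have m1 : ∀ (a : A) (m : ℕ), mkLetter bot (Sum.inr (Sum.inl (a, 1)) : EncLabel Q A) m
      = Sum.inl a := by
    intro a m; simp [mkLetter]
  have m2 : ∀ (a : A) (m : ℕ), mkLetter bot (Sum.inr (Sum.inl (a, 2)) : EncLabel Q A) m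
      = Sum.inr (a, m) := by
    intro a m; simp [mkLetter]
  rcases hlvl with rfl | rfl <;> rcases hlvl' with rfl | rfl <;> intro hcon
  · rw [m1, m1] at hcon
    simp only [Sum.inl.injEq] at hcon
    subst hcon
    exact hdiff σ0 ⟨rfl, rfl⟩
  · rw [m1, m2] at hcon
    exact nomatch hcon
  · rw [m2, m1] at hcon
    exact nomatch hcon
  · rw [m2, m2] at hcon
    simp only [Sum.inr.injEq, Prod.mk.injEq] at hcon
    exact hnn hcon.2

theorem takeWhile_all_append {α : Type} (p : α → Bool) : ∀ (x y : List α),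
    (∀ u ∈ x, p u = true) → (∀ u, y.head? = some u → p u = false) →
    (x ++ y).takeWhile p = x ∧ (x ++ y).dropWhile p = y
  | [], y, _, hy => by
    cases y with
    | nil => simp
    | cons u y' =>
      have := hy u (by simp)
      simp [List.takeWhile_cons, List.dropWhile_cons, this]
  | u :: x', y, hx, hy => by
    have hu := hx u (by simp)
    have := takeWhile_all_append p x' y (fun v hv => hx v (by simp [hv])) hy
    simp only [List.cons_append, List.takeWhile_cons, List.dropWhile_cons, hu, if_pos]
    constructor
    · simp [this.1]
    · simpa using this.2

theorem surj_aux {bot : A} : ∀ (N : ℕ) (t : PTree (EncLabel Q A)), t.psize ≤ N →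
    Pt bot t → ∀ (τ : Letter A) (n : ℕ),
    ∃ l : Stack2 A, GoodBL bot τ n l ∧ encBL2 Q t.lab l = t ∧
      (l.headD []).tail.head? = t.lft.map (fun tl => mkLetter bot tl.lab n) := by
  intro N
  induction N with
  | zero => intro t ht; cases t with | node a lc rc => simp [PTree.psize_node] at ht
  | succ N ih =>
    intro t ht hpt τ n
    cases t with
    | node σ lc rc =>
      cases lc with
      | none =>
        cases rc with
        | none =>
          refine ⟨[[τ]], ?_, ?_, by simp⟩
          · constructor
            · simp
            · intro w hw; simp at hw; simp [hw]
            · intro w hw x hx; simp at hw; subst hw; simp at hx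
            · intro a k hk; simp at hk
            · intro i w w' hw hw' j a k hk
              exfalso
              have := getElem?_some_lt hw'
              simp at this
          · rw [show (PTree.node σ none none).lab = σ from rfl]
            rw [encBL2_small_nil σ [τ] (by simp)]
        | some tr =>
          obtain ⟨hlabtr, hpttr⟩ := hpt.right' tr rfl
          obtain ⟨l₂, hg2, he2, _⟩ := ih tr (by have := PTree.psize_lt_right σ none tr; omega)
            hpttr τ (n + 1)
          obtain ⟨y, ys, rfl⟩ : ∃ y ys, l₂ = y :: ys := by
            cases l₂ with
            | nil => exact absurd rfl hg2.ne
            | cons y ys => exact ⟨y, ys, rfl⟩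
          refine ⟨[τ] :: y :: ys, ?_, ?_, by simp⟩
          · constructor
            · simp
            · intro w hw
              rcases List.mem_cons.mp hw with rfl | hw
              · simp
              · exact hg2.heads w hw
            · intro w hw x hx
              rcases List.mem_cons.mp hw with rfl | hw
              · simp at hx
              · exact hg2.syms w hw x hx
            · intro a k hk; simp at hk
            · intro i w w' hw hw' j a k hk
              cases i with
              | zero =>
                have hw'' : y = w' := by simpa using hw'
                left
                have h0 : y.tail[j]? = some (Sum.inr (a, k)) := by
                  rw [List.getElem?_tail, hw'']
                  exact hk
                have := hg2.first a k (by simpa using List.mem_of_getElem? h0)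
                omega
              | succ i' =>
                rw [List.getElem?_cons_succ] at hw hw'
                have := hg2.links i' w w' hw hw' j a k hk
                rcases this with h1 | h1
                · left; omega
                · right; exact h1
          · rw [show (PTree.node σ none (some tr)).lab = σ from rfl]
            rw [encBL2_small_cons σ [τ] y ys (by simp) (by simp)
              (fun v hv => hg2.word_ne hv)]
            rw [show epsLab = tr.lab from hlabtr.symm, he2]
      | some tl =>
        obtain ⟨hlabtl, hpttl⟩ := hpt.left' tl rfl
        obtain ⟨l₁, hg1, he1, _⟩ := ih tl (by have := PTree.psize_lt_left σ tl rc; omega)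
          hpttl (mkLetter bot tl.lab n) n
        obtain ⟨v, vs, rfl⟩ : ∃ v vs, l₁ = v :: vs := by
          cases l₁ with
          | nil => exact absurd rfl hg1.ne
          | cons v vs => exact ⟨v, vs, rfl⟩
        set τ' := mkLetter bot tl.lab n with hτ'def
        have hsymτ' : symLab (Q := Q) τ' = tl.lab := mkLetter_symLab hlabtl n
        have hτ'bot : symOf τ' ≠ bot := mkLetter_sym hlabtl n
        set blk := (v :: vs).map (fun u => τ :: u) with hblkdef
        have hblkheads : ∀ u ∈ blk, u.head? = some τ := by
          intro u hu
          obtain ⟨u0, _, rfl⟩ := List.mem_map.mp hu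
          simp
        have hw1 : (τ :: v)[1]? = some τ' := by
          have := hg1.heads v (by simp)
          rw [getElem?_cons_one]
          cases v with
          | nil => simp at this
          | cons c cs => simpa using this
        have hwtake2 : (τ :: v).take 2 = [τ, τ'] :=
          take2_of_head (by simp) hw1
        have hw2len : 2 ≤ (τ :: v).length := by
          have := List.length_pos_iff.mpr (hg1.word_ne (w := v) (by simp))
          simp only [List.length_cons]
          omega
        have hblkP : ∀ u ∈ blk, (fun z => decide (z.take 2 = (τ :: v).take 2)) u = true := by
          intro u hu
          obtain ⟨u0, hu0, rfl⟩ := List.mem_map.mp hu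
          have hu0h := hg1.heads u0 hu0
          have : (τ :: u0).take 2 = [τ, τ'] := by
            apply take2_of_head (by simp)
            rw [getElem?_cons_one]
            cases u0 with
            | nil => simp at hu0h
            | cons c cs => simpa using hu0h
          simp only [decide_eq_true_eq]
          rw [this, hwtake2]
        have hblktail : blk.map List.tail = v :: vs := by
          rw [hblkdef, List.map_map]
          have hcomp : (List.tail ∘ fun u : Word A => τ :: u) = id := by funext u; rfl
          rw [hcomp, List.map_id]
        -- the common part of the Good proof for blk-words
        have hblksyms : ∀ u ∈ blk, ∀ x ∈ u.tail, symOf x ≠ bot := by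
          intro u hu x hx
          obtain ⟨u0, hu0, rfl⟩ := List.mem_map.mp hu
          simp only [List.tail_cons] at hx
          have hu0c := hg1.head_eq hu0
          rw [hu0c] at hx
          rcases List.mem_cons.mp hx with rfl | hx
          · exact hτ'bot
          · exact hg1.syms u0 hu0 x hx
        cases rc with
        | none =>
          refine ⟨blk, ?_, ?_, ?_⟩
          · constructor
            · simp [hblkdef]
            · exact hblkheads
            · exact hblksyms
            · intro a k hk
              simp only [hblkdef, List.map_cons, List.headD_cons, List.tail_cons] at hk
              have hvc := hg1.head_eq (w := v) (by simp)
              rw [hvc] at hk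
              rcases List.mem_cons.mp hk with he | hx
              · exact mkLetter_link he.symm
              · exact hg1.first a k (by simpa using hx)
            · intro i u u' hu hu' j a k hk
              rw [hblkdef, List.getElem?_map] at hu hu'
              cases e : (v :: vs)[i]? with
              | none => rw [e] at hu; simp at hu
              | some u0 =>
              cases e' : (v :: vs)[i+1]? with
              | none => rw [e'] at hu'; simp at hu'
              | some u0' =>
                rw [e] at hu; rw [e'] at hu'
                simp only [Option.map_some, Option.some.injEq] at hu hu'
                subst hu; subst hu'
                cases j with
                | zero =>
                  right
                  have h0 : u0'.head? = some τ' := hg1.heads u0' (List.mem_of_getElem? e')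
                  have h0' : u0.head? = some τ' := hg1.heads u0 (List.mem_of_getElem? e)
                  have t1 : (τ :: u0').take 2 = [τ, τ'] := by
                    apply take2_of_head (by simp)
                    rw [getElem?_cons_one]
                    cases u0' with
                    | nil => simp at h0
                    | cons c cs => simpa using h0
                  have t2 : (τ :: u0).take 2 = [τ, τ'] := by
                    apply take2_of_head (by simp)
                    rw [getElem?_cons_one]
                    cases u0 with
                    | nil => simp at h0'
                    | cons c cs => simpa using h0'
                  rw [t1, t2]
                | succ j' =>
                  have hk0 : u0'[j' + 1]? = some (Sum.inr (a, k)) := by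
                    rw [List.getElem?_cons_succ] at hk
                    exact hk
                  have := hg1.links i u0 u0' e e' j' a k hk0
                  rcases this with h1 | h1
                  · left; exact h1
                  · right
                    rw [show j' + 1 + 2 = (j' + 2) + 1 from rfl]
                    rw [List.take_succ_cons, List.take_succ_cons, h1]
          · rw [show (PTree.node σ (some tl) none).lab = σ from rfl]
            rw [show blk = (τ :: v) :: vs.map (fun u => τ :: u) from by simp [hblkdef]]
            rw [encBL2_big σ (τ :: v) (vs.map (fun u => τ :: u)) τ' (by omega) hw1
              (by intro u hu
                  rw [show ((τ :: v) :: vs.map (fun u => τ :: u)) = blk from by simp [hblkdef]]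
                    at hu
                  obtain ⟨u0, _, rfl⟩ := List.mem_map.mp hu
                  simp)]
            have := takeWhile_all_append (fun z => decide (z.take 2 = (τ :: v).take 2))
              blk [] hblkP (by intro u hu; simp at hu)
            simp only [List.append_nil] at this
            rw [show ((τ :: v) :: vs.map (fun u => τ :: u)) = blk from by simp [hblkdef]]
            rw [this.1, this.2, hblktail]
            rw [hsymτ', he1]
          · simp only [hblkdef, List.map_cons, List.headD_cons, List.tail_cons,
              PTree.lft_node, Option.map_some]
            exact hg1.heads v (by simp)
        | some tr =>
          obtain ⟨hlabtr, hpttr⟩ := hpt.right' tr rfl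
          obtain ⟨l₂, hg2, he2, hh2⟩ := ih tr (by have := PTree.psize_lt_right σ (some tl) tr; omega)
            hpttr τ (n + (v :: vs).length)
          obtain ⟨y, ys, rfl⟩ : ∃ y ys, l₂ = y :: ys := by
            cases l₂ with
            | nil => exact absurd rfl hg2.ne
            | cons y ys => exact ⟨y, ys, rfl⟩
          simp only [List.headD_cons] at hh2
          have hyP : (fun z => decide (z.take 2 = (τ :: v).take 2)) y = false := by
            simp only [decide_eq_false_iff_not]
            intro hcon
            rw [hwtake2] at hcon
            have hyh : y.head? = some τ := hg2.heads y (by simp)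
            cases hyt : y.tail.head? with
            | none =>
              have : y.length ≤ 1 := by
                cases y with
                | nil => simp
                | cons c cs =>
                  cases cs with
                  | nil => simp
                  | cons d ds => simp at hyt
              have := congrArg List.length hcon
              simp at this
              omega
            | some τ'' =>
              have hyt2 := hyt
              rw [hh2] at hyt
              cases hlft : tr.lft with
              | none => rw [hlft] at hyt; simp at hyt
              | some trl =>
                rw [hlft] at hyt
                simp only [Option.map_some, Option.some.injEq] at hyt
                obtain ⟨hlabtrl, _⟩ := by
                  cases tr with
                  | node b lc' rc' =>
                    simp only [PTree.lft_node] at hlft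
                    exact hpttr.left' trl hlft
                have hne2 : τ'' ≠ τ' := by
                  rw [← hyt, hτ'def]
                  intro hcon2
                  exact mkLetter_ne hlabtrl hlabtl (by simp) (by
                    intro σ0 hpair
                    exact hpt.nodup' tl tr trl rfl rfl hlft σ0 ⟨hpair.2, hpair.1⟩) hcon2
                -- y = τ :: τ'' :: _, contradiction with hcon
                cases y with
                | nil => simp at hyh
                | cons c cs =>
                  cases cs with
                  | nil => simp at hyt2
                  | cons d ds =>
                    simp only [List.head?_cons, Option.some.injEq] at hyh
                    simp only [List.tail_cons, List.head?_cons, Option.some.injEq] at hyt2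
                    simp only [List.take_succ_cons, List.take_zero, List.cons.injEq] at hcon
                    exact hne2 (by rw [← hyt2]; exact hcon.2.1)
          have hsplit := takeWhile_all_append (fun z => decide (z.take 2 = (τ :: v).take 2))
            blk (y :: ys) hblkP
            (by intro u hu; simp only [List.head?_cons, Option.some.injEq] at hu; rw [← hu]
                exact hyP)
          refine ⟨blk ++ (y :: ys), ?_, ?_, ?_⟩
          · constructor
            · simp [hblkdef]
            · intro u hu
              rcases List.mem_append.mp hu with h1 | h1
              · exact hblkheads u h1
              · exact hg2.heads u h1
            · intro u hu x hx
              rcases List.mem_append.mp hu with h1 | h1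
              · exact hblksyms u h1 x hx
              · exact hg2.syms u h1 x hx
            · intro a k hk
              have : (blk ++ (y :: ys)).headD [] = τ :: v := by
                simp [hblkdef]
              rw [this, List.tail_cons] at hk
              have hvc := hg1.head_eq (w := v) (by simp)
              rw [hvc] at hk
              rcases List.mem_cons.mp hk with he | hx
              · exact mkLetter_link he.symm
              · exact hg1.first a k (by simpa using hx)
            · intro i u u' hu hu' j a k hk
              have hblklen : blk.length = (v :: vs).length := by simp [hblkdef]
              by_cases hi : i + 1 < blk.length
              · -- both inside blk
                rw [List.getElem?_append_left (by omega)] at hu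
                rw [List.getElem?_append_left hi] at hu'
                rw [hblkdef, List.getElem?_map] at hu hu'
                cases e : (v :: vs)[i]? with
                | none => rw [e] at hu; simp at hu
                | some u0 =>
                cases e' : (v :: vs)[i+1]? with
                | none => rw [e'] at hu'; simp at hu'
                | some u0' =>
                  rw [e] at hu; rw [e'] at hu'
                  simp only [Option.map_some, Option.some.injEq] at hu hu'
                  subst hu; subst hu'
                  cases j with
                  | zero =>
                    right
                    have h0 : u0'.head? = some τ' := hg1.heads u0' (List.mem_of_getElem? e')
                    have h0' : u0.head? = some τ' := hg1.heads u0 (List.mem_of_getElem? e)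
                    have t1 : (τ :: u0').take 2 = [τ, τ'] := by
                      apply take2_of_head (by simp)
                      rw [getElem?_cons_one]
                      cases u0' with
                      | nil => simp at h0
                      | cons c cs => simpa using h0
                    have t2 : (τ :: u0).take 2 = [τ, τ'] := by
                      apply take2_of_head (by simp)
                      rw [getElem?_cons_one]
                      cases u0 with
                      | nil => simp at h0'
                      | cons c cs => simpa using h0'
                    rw [t1, t2]
                  | succ j' =>
                    have hk0 : u0'[j' + 1]? = some (Sum.inr (a, k)) := by
                      rw [List.getElem?_cons_succ] at hk
                      exact hk
                    have := hg1.links i u0 u0' e e' j' a k hk0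
                    rcases this with h1 | h1
                    · left; exact h1
                    · right
                      rw [show j' + 1 + 2 = (j' + 2) + 1 from rfl]
                      rw [List.take_succ_cons, List.take_succ_cons, h1]
              · by_cases hi2 : i + 1 = blk.length
                · -- boundary pair
                  left
                  rw [List.getElem?_append_right (by omega),
                    show i + 1 - blk.length = 0 by omega] at hu'
                  simp only [List.getElem?_cons_zero, Option.some.injEq] at hu'
                  subst hu'
                  have h0 : y.tail[j]? = some (Sum.inr (a, k)) := by
                    rw [List.getElem?_tail]
                    exact hk
                  have := hg2.first a k (by simpa using List.mem_of_getElem? h0)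
                  rw [this, hblklen] at *
                  omega
                · -- both inside l₂
                  rw [List.getElem?_append_right (by omega)] at hu hu'
                  obtain ⟨i0, hi0⟩ : ∃ i0, i - blk.length = i0 := ⟨_, rfl⟩
                  rw [hi0] at hu
                  rw [show i + 1 - blk.length = i0 + 1 by omega] at hu'
                  have := hg2.links i0 u u' hu hu' j a k hk
                  rcases this with h1 | h1
                  · left
                    rw [hblklen] at *
                    omega
                  · right; exact h1
          · rw [show (PTree.node σ (some tl) (some tr)).lab = σ from rfl]
            rw [show blk ++ (y :: ys) = (τ :: v) :: (vs.map (fun u => τ :: u) ++ (y :: ys))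
              from by simp [hblkdef]]
            rw [encBL2_big σ (τ :: v) (vs.map (fun u => τ :: u) ++ (y :: ys)) τ' (by omega) hw1
              (by intro u hu
                  rw [show ((τ :: v) :: (vs.map (fun u => τ :: u) ++ (y :: ys))) =
                    blk ++ (y :: ys) from by simp [hblkdef]] at hu
                  rcases List.mem_append.mp hu with h1 | h1
                  · obtain ⟨u0, _, rfl⟩ := List.mem_map.mp h1
                    simp
                  · exact hg2.word_ne h1)]
            rw [show ((τ :: v) :: (vs.map (fun u => τ :: u) ++ (y :: ys))) =
              blk ++ (y :: ys) from by simp [hblkdef]]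
            rw [hsplit.1, hsplit.2, hblktail]
            rw [hsymτ', he1]
            rw [show epsLab = tr.lab from hlabtr.symm, he2]
          · have : (blk ++ (y :: ys)).headD [] = τ :: v := by simp [hblkdef]
            rw [this]
            simp only [List.tail_cons, PTree.lft_node, Option.map_some]
            exact hg1.heads v (by simp)

end EncBij
/-- The encoding `Enc : Q × Stacks(Σ) → EncTrees` is a bijection. -/
theorem enc_bijective
    {Q A : Type} [Fintype Q] [Fintype A] [DecidableEq A] (bot : A) :
    Set.BijOn (fun c : Q × Stack2 A => Enc bot c)
      {c | IsStack bot c.2} (EncTrees Q A bot) := by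
  refine ⟨?_, ?_, ?_⟩
  · -- maps to
    rintro ⟨q, s⟩ hc
    simp only [Set.mem_setOf_eq] at hc
    have hg : GoodSt bot s := hc.goodSt
    have hpt : Pt bot (encBL2 Q (Sum.inr (Sum.inl (bot, 1))) s) :=
      pt_encBL2 (size2 s) s le_rfl _ 0 hg _
    have hT : Enc bot (q, s) =
        PTree.node (Sum.inl q) (some (encBL2 Q (Sum.inr (Sum.inl (bot, 1))) s)) none := rfl
    simp only [EncTrees, Set.mem_setOf_eq, hT]
    set t0 := encBL2 Q (Sum.inr (Sum.inl (bot, 1))) s with ht0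
    refine ⟨⟨q, by rw [PTree.labelAt_nil]⟩, by rw [PTree.labelAt_true_none], ?_, ?_, ?_, ?_, ?_⟩
    · rw [show (([false] : List Bool)) = false :: ([] : List Bool) from rfl,
        PTree.labelAt_false_some, labelAt_nil_eq]
      simp
    · rw [show (([false] : List Bool)) = false :: ([] : List Bool) from rfl,
        PTree.labelAt_false_some, labelAt_nil_eq, ht0, encBL2_lab]
    · intro d x hx
      rw [PTree.labelAt_false_some] at hx
      exact labelAt_left_of_pt t0.psize t0 le_rfl hpt d x hx
    · intro d x hx
      cases d with
      | nil =>
        rw [List.nil_append, PTree.labelAt_true_none] at hx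
        exact nomatch hx
      | cons b d' =>
        cases b
        · rw [List.cons_append, PTree.labelAt_false_some] at hx
          exact labelAt_right_of_pt t0.psize t0 le_rfl hpt d' x hx
        · rw [List.cons_append, PTree.labelAt_true_none] at hx
          exact nomatch hx
    · intro d σ0 hcon
      obtain ⟨h1, h2⟩ := hcon
      cases d with
      | nil =>
        rw [List.nil_append, PTree.labelAt_true_none] at h2
        exact nomatch h2
      | cons b d' =>
        cases b
        · rw [List.cons_append, PTree.labelAt_false_some] at h1
          rw [List.cons_append, PTree.labelAt_false_some] at h2
          exact labelAt_nodup_of_pt t0.psize t0 le_rfl hpt d' σ0 ⟨h1, h2⟩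
        · rw [List.cons_append, PTree.labelAt_true_none] at h1
          exact nomatch h1
  · -- injective
    rintro ⟨q1, s1⟩ h1 ⟨q2, s2⟩ h2 heq
    simp only [Set.mem_setOf_eq] at h1 h2
    have hg1 : GoodSt bot s1 := h1.goodSt
    have hg2 : GoodSt bot s2 := h2.goodSt
    have hT1 : Enc bot (q1, s1) =
        PTree.node (Sum.inl q1) (some (encBL2 Q (Sum.inr (Sum.inl (bot, 1))) s1)) none := rfl
    have hT2 : Enc bot (q2, s2) =
        PTree.node (Sum.inl q2) (some (encBL2 Q (Sum.inr (Sum.inl (bot, 1))) s2)) none := rfl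
    simp only at heq
    rw [hT1, hT2] at heq
    simp only [PTree.node.injEq, Option.some.injEq, Sum.inl.injEq, and_true] at heq
    obtain ⟨hq, hs⟩ := heq
    have := encBL2_inj (size2 s1) s1 s2 le_rfl (Sum.inl bot) 0 hg1 hg2 _ hs
    simp [hq, this]
  · -- surjective
    intro T hT
    simp only [EncTrees, Set.mem_setOf_eq] at hT
    obtain ⟨⟨q, hq⟩, h2, h3, h4, h5, h6, h7⟩ := hT
    cases T with
    | node a lc rc =>
      rw [PTree.labelAt_nil] at hq
      simp only [Option.some.injEq] at hq
      subst hq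
      cases rc with
      | some u =>
        exfalso
        rw [show ([true] : List Bool) = true :: ([] : List Bool) from rfl,
          PTree.labelAt_true_some, labelAt_nil_eq] at h2
        exact nomatch h2
      | none =>
      cases lc with
      | none =>
        exfalso
        rw [show ([false] : List Bool) = false :: ([] : List Bool) from rfl,
          PTree.labelAt_false_none] at h3
        exact h3 rfl
      | some t0 =>
        rw [show ([false] : List Bool) = false :: ([] : List Bool) from rfl,
          PTree.labelAt_false_some, labelAt_nil_eq] at h4
        simp only [Option.some.injEq] at h4
        have hpt : Pt bot t0 := by
          apply pt_of_labelAt t0.psize t0 le_rfl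
          · intro d x hx
            exact h5 d x (by rw [PTree.labelAt_false_some]; exact hx)
          · intro d x hx
            exact h6 (false :: d) x
              (by rw [List.cons_append, PTree.labelAt_false_some]; exact hx)
          · intro d σ0 hcon
            exact h7 (false :: d) σ0
              ⟨by rw [List.cons_append, PTree.labelAt_false_some]; exact hcon.1,
               by rw [List.cons_append, PTree.labelAt_false_some]; exact hcon.2⟩
        obtain ⟨l, hgood, henc, -⟩ := surj_aux t0.psize t0 le_rfl hpt (Sum.inl bot) 0
        have hstack : IsStack bot l := GoodSt.isStack l.length l le_rfl hgood
        refine ⟨(q, l), by simpa using hstack, ?_⟩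
        have : Enc bot (q, l) =
            PTree.node (Sum.inl q) (some (encBL2 Q (Sum.inr (Sum.inl (bot, 1))) l)) none := rfl
        simp only [this]
        rw [show (Sum.inr (Sum.inl (bot, 1)) : EncLabel Q A) = t0.lab from h4.symm, henc]

end CPG
end
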